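/- arXiv:2306.01216 — 7 statements merged into one kernel-verified Lean document; each statement's English description precedes it below -/
import Mathlib

section
/- For every odd positive integer k, every odd cycle C_{2m+1} (m ≥ 1) has an almost perfect integer k-matching, and moreover for any prescribed vertex v of the cycle there is such a matching in which v is the deficient vertex (vertex sum k−1). -/
open SimpleGraph Finset

namespace IntKM

variable {V : Type*}

/-- Sum of edge weights over edges incident to `v`. -/
def vsum [Fintype V] [DecidableEq V] (h : Sym2 V → ℕ) (v : V) : ℕ :=
  ∑ e ∈ Finset.univ.filter (fun e => v ∈ e), h e

/-- `h` is an integer `k`-matching of `G`. -/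
def IsIntKMatching [Fintype V] [DecidableEq V] (G : SimpleGraph V) (k : ℕ)
    (h : Sym2 V → ℕ) : Prop :=
  (∀ e, h e ≤ k) ∧ (∀ e, e ∉ G.edgeSet → h e = 0) ∧ ∀ v, vsum h v ≤ k

/-- `G` has a perfect integer `k`-matching. -/
def HasPerfect [Fintype V] [DecidableEq V] (G : SimpleGraph V) (k : ℕ) : Prop :=
  ∃ h : Sym2 V → ℕ, IsIntKMatching G k h ∧ ∀ v, vsum h v = k

/-- `G` has an almost perfect integer `k`-matching. -/
def HasAlmost [Fintype V] [DecidableEq V] (G : SimpleGraph V) (k : ℕ) : Prop :=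
  ∃ h : Sym2 V → ℕ, IsIntKMatching G k h ∧
    ∃ v' : V, vsum h v' = k - 1 ∧ ∀ v, v ≠ v' → vsum h v = k

/-- `M` is a matching (a set of pairwise non-adjacent edges) of `G`. -/
def IsMatchingSet (G : SimpleGraph V) (M : Finset (Sym2 V)) : Prop :=
  ↑M ⊆ G.edgeSet ∧ ∀ e₁ ∈ M, ∀ e₂ ∈ M, e₁ ≠ e₂ → ∀ v : V, v ∈ e₁ → v ∉ e₂

/-- `G` has a perfect matching. -/
def HasPerfectM (G : SimpleGraph V) : Prop :=
  ∃ M : Finset (Sym2 V), IsMatchingSet G M ∧ ∀ v : V, ∃ e ∈ M, v ∈ e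

/-- `G` has an almost perfect matching. -/
def HasAlmostM (G : SimpleGraph V) : Prop :=
  ∃ M : Finset (Sym2 V), IsMatchingSet G M ∧
    ∃ v' : V, (∀ e ∈ M, v' ∉ e) ∧ ∀ v : V, v ≠ v' → ∃ e ∈ M, v ∈ e

/-- Integer `k`-matching preclusion number `mp^k(G)`. -/
noncomputable def mpk [Fintype V] [DecidableEq V] (G : SimpleGraph V) (k : ℕ) : ℕ :=
  sInf {n | ∃ F : Finset (Sym2 V), ↑F ⊆ G.edgeSet ∧ F.card = n ∧
    ¬ HasPerfect (G.deleteEdges ↑F) k ∧ ¬ HasAlmost (G.deleteEdges ↑F) k}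

/-- Strong integer `k`-matching preclusion number `smp^k(G)`. -/
noncomputable def smpk [Fintype V] [DecidableEq V] (G : SimpleGraph V) (k : ℕ) : ℕ :=
  sInf {n | ∃ (S : Finset V) (F : Finset (Sym2 V)), ↑F ⊆ G.edgeSet ∧ S.card + F.card = n ∧
    ¬ HasPerfect ((G.deleteEdges ↑F).induce ((↑(Sᶜ) : Set V))) k ∧
    ¬ HasAlmost ((G.deleteEdges ↑F).induce ((↑(Sᶜ) : Set V))) k}

/-- Matching preclusion number `mp(G)`. -/
noncomputable def mp [Fintype V] [DecidableEq V] (G : SimpleGraph V) : ℕ :=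
  sInf {n | ∃ F : Finset (Sym2 V), ↑F ⊆ G.edgeSet ∧ F.card = n ∧
    ¬ HasPerfectM (G.deleteEdges ↑F) ∧ ¬ HasAlmostM (G.deleteEdges ↑F)}

/-- Strong matching preclusion number `smp(G)`. -/
noncomputable def smp [Fintype V] [DecidableEq V] (G : SimpleGraph V) : ℕ :=
  sInf {n | ∃ (S : Finset V) (F : Finset (Sym2 V)), ↑F ⊆ G.edgeSet ∧ S.card + F.card = n ∧
    ¬ HasPerfectM ((G.deleteEdges ↑F).induce ((↑(Sᶜ) : Set V))) ∧
    ¬ HasAlmostM ((G.deleteEdges ↑F).induce ((↑(Sᶜ) : Set V)))}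

/-- Number of odd components with at least three vertices. -/
noncomputable def oddBigComponents {W : Type*} (H : SimpleGraph W) : ℕ :=
  Nat.card {c : H.ConnectedComponent // Odd (Nat.card c.supp) ∧ 3 ≤ Nat.card c.supp}

/-- Number of isolated vertices (components with exactly one vertex). -/
noncomputable def isolatedCount {W : Type*} (H : SimpleGraph W) : ℕ :=
  Nat.card {c : H.ConnectedComponent // Nat.card c.supp = 1}

/-- Total weight of an edge-weight function. -/
def totalWeight [Fintype V] [DecidableEq V] (h : Sym2 V → ℕ) : ℕ :=
  ∑ e : Sym2 V, h e

/-- Integer `k`-matching number `μ_k(G)`. -/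
noncomputable def intKMatchingNumber [Fintype V] [DecidableEq V]
    (G : SimpleGraph V) (k : ℕ) : ℕ :=
  sSup {w | ∃ h : Sym2 V → ℕ, IsIntKMatching G k h ∧ totalWeight h = w}

/-- Matching number `μ(G)`. -/
noncomputable def matchingNumber [Fintype V] [DecidableEq V] (G : SimpleGraph V) : ℕ :=
  sSup {n | ∃ M : Finset (Sym2 V), IsMatchingSet G M ∧ M.card = n}

end IntKM

open IntKM

namespace IntKM

lemma le_vsum {V : Type*} [Fintype V] [DecidableEq V] (h : Sym2 V → ℕ) {u : V} {e : Sym2 V}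
    (hu : u ∈ e) : h e ≤ vsum h u :=
  Finset.single_le_sum (fun _ _ => Nat.zero_le _) (Finset.mem_filter.mpr ⟨Finset.mem_univ _, hu⟩)

section Cycle

variable {n : ℕ} (w : Fin (n + 1) → ℕ)

def cycleWeights (e : Sym2 (Fin (n + 1))) : ℕ :=
  ∑ a, if e = s(a, a + 1) then w a else 0

lemma vsum_cycleWeights (hn : 1 ≤ n) (u : Fin (n + 1)) :
    vsum (cycleWeights w) u = w u + w (u - 1) := by
  have hne : u ≠ u - 1 := fun h =>
    absurd (sub_eq_self.mp h.symm) (Fin.one_eq_zero_iff.not.mpr (by omega))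
  calc vsum (cycleWeights w) u
      = ∑ a, ∑ e ∈ Finset.univ.filter (fun e => u ∈ e), if e = s(a, a + 1) then w a else 0 :=
        Finset.sum_comm
    _ = ∑ a, if u = a ∨ u = a + 1 then w a else 0 := by
        simp [Finset.sum_ite_eq']
    _ = ∑ a ∈ {u, u - 1}, w a := by
        rw [← Finset.sum_filter]
        congr 1
        ext a
        simp [eq_sub_iff_add_eq, eq_comm]
    _ = w u + w (u - 1) := Finset.sum_pair hne

lemma cycleWeights_eq_zero (hn : 1 ≤ n) {e : Sym2 (Fin (n + 1))}
    (he : e ∉ (cycleGraph (n + 1)).edgeSet) : cycleWeights w e = 0 := by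
  refine Finset.sum_eq_zero fun a _ => if_neg ?_
  rintro rfl
  apply he
  rw [mem_edgeSet, cycleGraph_adj']
  right
  rw [add_sub_cancel_left, Fin.val_one']
  exact Nat.mod_eq_of_lt (by omega)

lemma isIntKMatching_cycleWeights (hn : 1 ≤ n) {k : ℕ} (hw : ∀ u, w u + w (u - 1) ≤ k) :
    IsIntKMatching (cycleGraph (n + 1)) k (cycleWeights w) := by
  refine ⟨fun e => ?_, fun e => cycleWeights_eq_zero w hn, fun u => ?_⟩
  · induction e using Sym2.ind with
    | _ a b => exact (le_vsum _ (Sym2.mem_mk_left a b)).trans (vsum_cycleWeights w hn a ▸ hw a)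
  · exact vsum_cycleWeights w hn u ▸ hw u

lemma val_mod_two_add_val_sub_one_mod_two (hn : Even n) (x : Fin (n + 1)) :
    x.val % 2 + (x - 1).val % 2 = if x = 0 then 0 else 1 := by
  rw [Fin.coe_sub_one]
  split_ifs with hx
  · simp [hx, Nat.even_iff.mp hn]
  · have : x.val ≠ 0 := Fin.val_ne_iff.mpr hx
    omega

end Cycle

end IntKM

open IntKM

theorem stmt5 (k : ℕ) (hk : Odd k) (m : ℕ) (hm : 1 ≤ m)
    (v : Fin (2 * m + 1)) :
    ∃ h : Sym2 (Fin (2 * m + 1)) → ℕ,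
      IsIntKMatching (SimpleGraph.cycleGraph (2 * m + 1)) k h ∧
      vsum h v = k - 1 ∧ ∀ u, u ≠ v → vsum h u = k := by
  -- Around the cycle from `v` the edge weights alternate `⌊k/2⌋, ⌈k/2⌉, …`: every other vertex
  -- sees one of each, while the odd length gives `v` two edges of weight `⌊k/2⌋`.
  let w : Fin (2 * m + 1) → ℕ := fun a => k / 2 + (a - v).val % 2
  have hsum (u) : vsum (cycleWeights w) u = if u = v then k - 1 else k := by
    have hpar := val_mod_two_add_val_sub_one_mod_two (even_two_mul m) (u - v)
    rw [sub_right_comm u v 1] at hpar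
    simp only [sub_eq_zero] at hpar
    have := Nat.odd_iff.mp hk
    rw [vsum_cycleWeights w (by omega)]
    simp only [w]
    split_ifs at hpar ⊢ <;> omega
  refine ⟨cycleWeights w, isIntKMatching_cycleWeights w (by omega) fun u => ?_, ?_, fun u hu => ?_⟩
  · rw [← vsum_cycleWeights w (by omega), hsum]
    split_ifs <;> omega
  · simp [hsum]
  · simp [hsum, hu]
end

section
/- Let k be an odd positive integer and let G be a graph with an almost perfect integer k-matching. Then for every subset S of V(G), odd(G−S) + k·i(G−S) ≤ k|S| + 1, where odd(G−S) is the number of odd components of G−S with at least three vertices and i(G−S) is the number of isolated vertices of G−S. -/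
open SimpleGraph Finset

open IntKM

lemma IKM6_even_double_sum {α : Type*} [DecidableEq α] (A : Finset α) (g : α → α → ℕ)
    (hsymm : ∀ a b, g a b = g b a) (hdiag : ∀ a, g a a = 0) :
    Even (∑ a ∈ A, ∑ b ∈ A, g a b) := by
  rw [← Finset.sum_product']
  rw [even_iff_two_dvd, ← ZMod.natCast_eq_zero_iff, Nat.cast_sum]
  refine Finset.sum_involution (fun p _ => p.swap) ?_ ?_ ?_ ?_
  · intro a ha
    simp only [Prod.fst_swap, Prod.snd_swap]
    rw [hsymm a.2 a.1, ← Nat.cast_add, ← two_mul, Nat.cast_mul]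
    simp only [mul_eq_zero]
    exact Or.inl (by decide)
  · intro a ha hne hswap
    have h1 : a.1 = a.2 := (congrArg Prod.fst hswap).symm
    exact hne (by simp [h1, hdiag])
  · intro a ha
    rw [Finset.mem_product] at ha ⊢
    exact ⟨ha.2, ha.1⟩
  · intro a ha
    exact Prod.swap_swap a

lemma IKM6_vsum_eq {V : Type*} [Fintype V] [DecidableEq V] (h : Sym2 V → ℕ)
    (v : V) : ∑ e ∈ Finset.univ.filter (fun e => v ∈ e), h e = ∑ w : V, h s(v, w) := by
  have hinj : Function.Injective (fun w : V => s(v, w)) := by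
    intro a b hab
    simp only [Sym2.eq, Sym2.rel_iff', Prod.mk.injEq, Prod.swap_prod_mk] at hab
    rcases hab with ⟨_, h2⟩ | ⟨h1, h2⟩
    · exact h2
    · exact h2.trans h1
  have himg : Finset.univ.filter (fun e => v ∈ e) = Finset.univ.image (fun w : V => s(v, w)) := by
    ext e
    simp only [Finset.mem_filter, Finset.mem_univ, true_and, Finset.mem_image]
    constructor
    · intro hv
      induction e with
      | _ a b =>
        rcases Sym2.mem_iff.mp hv with rfl | rfl
        · exact ⟨b, rfl⟩
        · exact ⟨a, Sym2.eq_swap⟩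
    · rintro ⟨w, _, rfl⟩
      exact Sym2.mem_mk_left v w
  rw [himg, Finset.sum_image (fun a _ b _ hab => hinj hab)]


theorem stmt6 {V : Type*} [Fintype V] [DecidableEq V] (G : SimpleGraph V) (k : ℕ)
    (hk : Odd k) (hG : HasAlmost G k) (S : Finset V) :
    oddBigComponents (G.induce ((↑(Sᶜ) : Set V))) +
      k * isolatedCount (G.induce ((↑(Sᶜ) : Set V))) ≤ k * S.card + 1 := by
  classical
  obtain ⟨h, ⟨hle, hedge, hub⟩, v', hv', hvk⟩ := hG
  have hk1 : 1 ≤ k := hk.pos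
  set W : Set V := (↑(Sᶜ) : Set V) with hW
  set H : SimpleGraph W := G.induce W with hHdef
  have h0 : ∀ v : V, h s(v, v) = 0 := fun v => hedge _ (by simp)
  set g : V → V → ℕ := fun a b => if a = b then 0 else h s(a, b) with hg
  have hgdiag : ∀ a, g a a = 0 := fun a => by simp [hg]
  have hgsymm : ∀ a b, g a b = g b a := by
    intro a b
    rcases eq_or_ne a b with rfl | hab
    · rfl
    · rw [hg]; simp only [if_neg hab, if_neg hab.symm, Sym2.eq_swap]
  have hvsum : ∀ v, vsum h v = ∑ w, g v w := by
    intro v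
    rw [vsum, IKM6_vsum_eq h v]
    refine Finset.sum_congr rfl fun w _ => ?_
    rcases eq_or_ne v w with rfl | hvw
    · simp [hg, h0]
    · simp [hg, hvw]
  have hgadj : ∀ a b, g a b ≠ 0 → G.Adj a b := by
    intro a b hne
    rcases eq_or_ne a b with rfl | hab
    · exact absurd (hgdiag a) hne
    · rw [hg] at hne; simp only [if_neg hab] at hne
      by_contra hadj
      exact hne (hedge _ (by simpa [SimpleGraph.mem_edgeSet] using hadj))
  set A : H.ConnectedComponent → Finset V := fun c => c.supp.toFinset.image Subtype.val with hA
  have hmem : ∀ (c : H.ConnectedComponent) (v : V),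
      v ∈ A c ↔ ∃ hv : v ∈ W, H.connectedComponentMk ⟨v, hv⟩ = c := by
    intro c v
    simp only [hA, Finset.mem_image, Set.mem_toFinset,
      SimpleGraph.ConnectedComponent.mem_supp_iff]
    constructor
    · rintro ⟨⟨x, hx⟩, hc, rfl⟩; exact ⟨hx, hc⟩
    · rintro ⟨hv, hc⟩; exact ⟨⟨v, hv⟩, hc, rfl⟩
  have hWmem : ∀ v : V, v ∈ W ↔ v ∉ S := by
    intro v; rw [hW]; simp
  have hsubS : ∀ (c : H.ConnectedComponent), ∀ v ∈ A c, v ∉ S := by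
    intro c v hv
    obtain ⟨hvW, -⟩ := (hmem c v).mp hv
    exact (hWmem v).mp hvW
  have hcard : ∀ c : H.ConnectedComponent, (A c).card = Nat.card c.supp := by
    intro c
    rw [hA]
    rw [Finset.card_image_of_injective _ Subtype.val_injective, Set.toFinset_card,
      Nat.card_eq_fintype_card]
  have hdisj : ∀ c d : H.ConnectedComponent, c ≠ d → Disjoint (A c) (A d) := by
    intro c d hcd
    rw [Finset.disjoint_left]
    intro v hvc hvd
    obtain ⟨hv, hc⟩ := (hmem c v).mp hvc
    obtain ⟨hv2, hd⟩ := (hmem d v).mp hvd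
    exact hcd (hc ▸ hd ▸ rfl)
  have hzero : ∀ (c : H.ConnectedComponent), ∀ a ∈ A c, ∀ b, b ∉ S → b ∉ A c → g a b = 0 := by
    intro c a ha b hbS hbA
    by_contra hne
    have hadj : G.Adj a b := hgadj a b hne
    obtain ⟨haW, hac⟩ := (hmem c a).mp ha
    have hbW : b ∈ W := (hWmem b).mpr hbS
    have hHadj : H.Adj ⟨a, haW⟩ ⟨b, hbW⟩ := by
      rw [hHdef]; exact hadj
    exact hbA ((hmem c b).mpr ⟨hbW,
      (SimpleGraph.ConnectedComponent.connectedComponentMk_eq_of_adj hHadj).symm.trans hac⟩)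
  have hdisjS : ∀ c : H.ConnectedComponent, Disjoint (A c) S := by
    intro c
    rw [Finset.disjoint_left]
    exact fun v hv => hsubS c v hv
  have hkey : ∀ c : H.ConnectedComponent,
      ∑ a ∈ A c, vsum h a = (∑ a ∈ A c, ∑ b ∈ A c, g a b) + ∑ a ∈ A c, ∑ b ∈ S, g a b := by
    intro c
    rw [← Finset.sum_add_distrib]
    refine Finset.sum_congr rfl fun a ha => ?_
    rw [hvsum a, ← Finset.sum_union (hdisjS c)]
    refine (Finset.sum_subset (Finset.subset_univ _) fun b _ hb => ?_).symm
    rw [Finset.mem_union] at hb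
    push_neg at hb
    exact hzero c a ha b hb.2 hb.1
  have heven : ∀ c : H.ConnectedComponent, Even (∑ a ∈ A c, ∑ b ∈ A c, g a b) :=
    fun c => IKM6_even_double_sum (A c) g hgsymm hgdiag
  set OB : Finset H.ConnectedComponent :=
    Finset.univ.filter (fun c => Odd ((A c).card) ∧ 3 ≤ (A c).card) with hOB
  set ISO : Finset H.ConnectedComponent :=
    Finset.univ.filter (fun c => (A c).card = 1) with hISO
  have hOBcard : oddBigComponents (G.induce W) = OB.card := by
    rw [oddBigComponents, Nat.card_eq_fintype_card, Fintype.card_subtype, hOB]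
    refine congrArg Finset.card (Finset.filter_congr fun c _ => ?_)
    rw [hcard c]
  have hISOcard : isolatedCount (G.induce W) = ISO.card := by
    rw [isolatedCount, Nat.card_eq_fintype_card, Fintype.card_subtype, hISO]
    refine congrArg Finset.card (Finset.filter_congr fun c _ => ?_)
    rw [hcard c]
  have hdisjOI : Disjoint OB ISO := by
    rw [Finset.disjoint_left]
    intro c hc1 hc2
    rw [hOB, Finset.mem_filter] at hc1
    rw [hISO, Finset.mem_filter] at hc2
    omega
  have hOBbound : ∀ c ∈ OB, 1 ≤ (∑ a ∈ A c, ∑ b ∈ S, g a b) + (if v' ∈ A c then 1 else 0) := by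
    intro c hc
    rw [hOB, Finset.mem_filter] at hc
    obtain ⟨-, hodd, -⟩ := hc
    by_cases hv'c : v' ∈ A c
    · rw [if_pos hv'c]; omega
    · rw [if_neg hv'c, add_zero]
      have hval : ∑ a ∈ A c, vsum h a = k * (A c).card := by
        rw [Finset.sum_congr rfl fun a ha => hvk a (fun he => hv'c (he ▸ ha)),
          Finset.sum_const, smul_eq_mul, mul_comm]
      have hoddtot : Odd (k * (A c).card) := hk.mul hodd
      rw [← hval, hkey c] at hoddtot
      obtain ⟨t, ht⟩ := heven c
      obtain ⟨m, hm⟩ := hoddtot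
      omega
  have hISObound : ∀ c ∈ ISO, k ≤ (∑ a ∈ A c, ∑ b ∈ S, g a b) + (if v' ∈ A c then 1 else 0) := by
    intro c hc
    rw [hISO, Finset.mem_filter] at hc
    obtain ⟨u, hu⟩ := Finset.card_eq_one.mp hc.2
    have hins : ∑ a ∈ A c, ∑ b ∈ A c, g a b = 0 := by
      rw [hu]; simp [hgdiag]
    have hEq : vsum h u = ∑ b ∈ S, g u b := by
      have h' := hkey c
      rw [hins, zero_add, hu, Finset.sum_singleton, Finset.sum_singleton] at h'
      exact h'
    rw [hu, Finset.sum_singleton]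
    by_cases huv : u = v'
    · subst huv
      rw [if_pos (Finset.mem_singleton_self u)]
      rw [hv'] at hEq
      omega
    · rw [hvk u huv] at hEq
      rw [if_neg (fun hh => huv (Finset.mem_singleton.mp hh).symm)]
      omega
  have hindbound : ∑ c ∈ OB ∪ ISO, (if v' ∈ A c then 1 else 0) ≤ 1 := by
    rw [← Finset.card_filter]
    refine Finset.card_le_one.mpr fun c hc d hd => ?_
    rw [Finset.mem_filter] at hc hd
    by_contra hcd
    exact (Finset.disjoint_left.mp (hdisj c d hcd)) hc.2 hd.2
  have hW2bound : ∑ c ∈ OB ∪ ISO, ∑ a ∈ A c, ∑ b ∈ S, g a b ≤ k * S.card := by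
    have hpair : (↑(OB ∪ ISO) : Set H.ConnectedComponent).PairwiseDisjoint A :=
      fun c _ d _ hcd => hdisj c d hcd
    calc ∑ c ∈ OB ∪ ISO, ∑ a ∈ A c, ∑ b ∈ S, g a b
        = ∑ a ∈ (OB ∪ ISO).biUnion A, ∑ b ∈ S, g a b := (Finset.sum_biUnion hpair).symm
      _ ≤ ∑ a : V, ∑ b ∈ S, g a b :=
          Finset.sum_le_sum_of_subset (Finset.subset_univ _)
      _ = ∑ b ∈ S, ∑ a : V, g a b := Finset.sum_comm
      _ = ∑ b ∈ S, vsum h b := by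
          refine Finset.sum_congr rfl fun b _ => ?_
          rw [hvsum b]
          exact Finset.sum_congr rfl fun a _ => hgsymm a b
      _ ≤ ∑ b ∈ S, k := Finset.sum_le_sum fun b _ => hub b
      _ = k * S.card := by rw [Finset.sum_const, smul_eq_mul, mul_comm]
  have hmain : OB.card + k * ISO.card ≤ k * S.card + 1 := by
    have h1 : OB.card + k * ISO.card ≤
        ∑ c ∈ OB ∪ ISO, ((∑ a ∈ A c, ∑ b ∈ S, g a b) + (if v' ∈ A c then 1 else 0)) := by
      rw [Finset.sum_union hdisjOI]
      refine add_le_add ?_ ?_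
      · calc OB.card = ∑ _c ∈ OB, 1 := by rw [Finset.sum_const, smul_eq_mul, mul_one]
          _ ≤ _ := Finset.sum_le_sum hOBbound
      · calc k * ISO.card = ∑ _c ∈ ISO, k := by rw [Finset.sum_const, smul_eq_mul, mul_comm]
          _ ≤ _ := Finset.sum_le_sum hISObound
    rw [Finset.sum_add_distrib] at h1
    omega
  rw [hOBcard, hISOcard]
  exact hmain
end

section
/- Let k ≥ 3 be odd. Then mp^k(K_5) = 3: deleting any 2 edges from K_5 leaves a graph with an almost perfect integer k-matching, while deleting the three edges of some triangle leaves a graph with neither a perfect nor an almost perfect integer k-matching. -/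
open SimpleGraph Finset

namespace IntKM

-- AUX

lemma vsum_single [Fintype V] [DecidableEq V] (e : Sym2 V) (w : ℕ) (v : V) :
    vsum (fun e' => if e' = e then w else 0) v = if v ∈ e then w else 0 := by
  unfold vsum
  rw [Finset.sum_ite_eq' _ e (fun _ => w)]
  simp

lemma vsum_four [Fintype V] [DecidableEq V] (e1 e2 e3 e4 : Sym2 V) (w1 w2 w3 w4 : ℕ) (v : V) :
    vsum (fun e => (if e = e1 then w1 else 0) + (if e = e2 then w2 else 0)
      + (if e = e3 then w3 else 0) + (if e = e4 then w4 else 0)) v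
    = (if v ∈ e1 then w1 else 0) + (if v ∈ e2 then w2 else 0)
      + (if v ∈ e3 then w3 else 0) + (if v ∈ e4 then w4 else 0) := by
  unfold vsum
  rw [Finset.sum_add_distrib, Finset.sum_add_distrib, Finset.sum_add_distrib]
  rw [Finset.sum_ite_eq' _ e1 (fun _ => w1), Finset.sum_ite_eq' _ e2 (fun _ => w2),
    Finset.sum_ite_eq' _ e3 (fun _ => w3), Finset.sum_ite_eq' _ e4 (fun _ => w4)]
  simp

lemma vsum_eq_sum [Fintype V] [DecidableEq V] (h : Sym2 V → ℕ) (v : V) :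
    vsum h v = ∑ u, h s(v, u) := by
  unfold vsum
  rw [show Finset.univ.filter (fun e => v ∈ e) = Finset.univ.image (fun u => s(v, u)) by
    ext e
    simp [Sym2.mem_iff_exists, eq_comm]]
  rw [Finset.sum_image (fun u _ u' _ hh => Sym2.congr_right.mp hh)]

lemma kmatch_mono [Fintype V] [DecidableEq V] {G G' : SimpleGraph V} (hle : G ≤ G') {k : ℕ}
    {h : Sym2 V → ℕ} (hm : IsIntKMatching G k h) : IsIntKMatching G' k h :=
  ⟨hm.1, fun e he => hm.2.1 e (fun c => he (edgeSet_mono hle c)), hm.2.2⟩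

lemma hasAlmost_mono [Fintype V] [DecidableEq V] {G G' : SimpleGraph V} (hle : G ≤ G') {k : ℕ}
    (hA : HasAlmost G k) : HasAlmost G' k := by
  obtain ⟨h, hm, v', hv', hall⟩ := hA
  exact ⟨h, kmatch_mono hle hm, v', hv', hall⟩

set_option maxHeartbeats 1000000 in
set_option synthInstance.maxHeartbeats 1000000 in
set_option synthInstance.maxSize 2000 in
lemma lemA : ∀ p q r s : Fin 5, p < q → r < s →
    ∃ x a b c d : Fin 5, x ≠ a ∧ x ≠ b ∧ x ≠ c ∧ x ≠ d ∧ a ≠ b ∧ a ≠ c ∧ a ≠ d ∧ b ≠ c ∧ b ≠ d ∧ c < d ∧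
      (¬((x=p∧a=q)∨(x=q∧a=p))) ∧ (¬((x=r∧a=s)∨(x=s∧a=r))) ∧
      (¬((x=p∧b=q)∨(x=q∧b=p))) ∧ (¬((x=r∧b=s)∨(x=s∧b=r))) ∧
      (¬((a=p∧b=q)∨(a=q∧b=p))) ∧ (¬((a=r∧b=s)∨(a=s∧b=r))) ∧
      (¬((c=p∧d=q)∨(c=q∧d=p))) ∧ (¬((c=r∧d=s)∨(c=s∧d=r))) := by decide

lemma ordered_rep (e : Sym2 (Fin 5)) (he : ¬ e.IsDiag) : ∃ p q : Fin 5, p < q ∧ e = s(p, q) := by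
  induction e with
  | _ u v =>
    rw [Sym2.mk_isDiag_iff] at he
    rcases lt_or_gt_of_ne he with h | h
    · exact ⟨u, v, h, rfl⟩
    · exact ⟨v, u, h, Sym2.eq_swap⟩

end IntKM

namespace IntKM

lemma core (k m : ℕ) (hm : k = 2*m+1) (e1 e2 : Sym2 (Fin 5))
    (h1 : ¬ e1.IsDiag) (h2 : ¬ e2.IsDiag) :
    HasAlmost ((⊤ : SimpleGraph (Fin 5)).deleteEdges {e1, e2}) k := by
  obtain ⟨p, q, hpq, rfl⟩ := ordered_rep e1 h1
  obtain ⟨r, s, hrs, rfl⟩ := ordered_rep e2 h2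
  obtain ⟨x, a, b, c, d, hxa, hxb, hxc, hxd, hab, hac, had, hbc, hbd, hcd',
    n1, n2, n3, n4, n5, n6, n7, n8⟩ := lemA p q r s hpq hrs
  have hcd : c ≠ d := ne_of_lt hcd'
  -- the four support edges are pairwise distinct
  have E12 : s(x,a) ≠ s(x,b) := by rw [Ne, Sym2.eq_iff]; tauto
  have E13 : s(x,a) ≠ s(a,b) := by rw [Ne, Sym2.eq_iff]; tauto
  have E14 : s(x,a) ≠ s(c,d) := by rw [Ne, Sym2.eq_iff]; tauto
  have E23 : s(x,b) ≠ s(a,b) := by rw [Ne, Sym2.eq_iff]; tauto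
  have E24 : s(x,b) ≠ s(c,d) := by rw [Ne, Sym2.eq_iff]; tauto
  have E34 : s(a,b) ≠ s(c,d) := by rw [Ne, Sym2.eq_iff]; tauto
  -- support edges are in the graph
  have hmem : ∀ u v : Fin 5, u ≠ v → ¬((u=p∧v=q)∨(u=q∧v=p)) → ¬((u=r∧v=s)∨(u=s∧v=r)) →
      s(u,v) ∈ ((⊤ : SimpleGraph (Fin 5)).deleteEdges {s(p,q), s(r,s)}).edgeSet := by
    intro u v huv hn1 hn2
    rw [SimpleGraph.edgeSet_deleteEdges, SimpleGraph.edgeSet_top]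
    refine ⟨by simpa using huv, ?_⟩
    intro hmem
    rcases hmem with hh | hh
    · exact hn1 (Sym2.eq_iff.mp hh)
    · exact hn2 (Sym2.eq_iff.mp (by simpa using hh))
  have M1 := hmem x a hxa n1 n2
  have M2 := hmem x b hxb n3 n4
  have M3 := hmem a b hab n5 n6
  have M4 := hmem c d hcd n7 n8
  -- every vertex is one of x,a,b,c,d
  have hall : ∀ v : Fin 5, v = x ∨ v = a ∨ v = b ∨ v = c ∨ v = d := by
    have hc5 : ({x,a,b,c,d} : Finset (Fin 5)).card = 5 := by
      rw [Finset.card_insert_of_notMem (by simp [hxa, hxb, hxc, hxd]),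
        Finset.card_insert_of_notMem (by simp [hab, hac, had]),
        Finset.card_insert_of_notMem (by simp [hbc, hbd]),
        Finset.card_insert_of_notMem (by simp [hcd]), Finset.card_singleton]
    intro v
    have huniv := Finset.eq_univ_of_card _ (by rw [hc5]; simp)
    have : v ∈ ({x,a,b,c,d} : Finset (Fin 5)) := huniv ▸ Finset.mem_univ v
    simpa using this
  refine ⟨fun e => (if e = s(x,a) then m else 0) + (if e = s(x,b) then m else 0)
    + (if e = s(a,b) then m+1 else 0) + (if e = s(c,d) then k else 0), ⟨?_, ?_, ?_⟩, x, ?_, ?_⟩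
  · intro e
    dsimp only
    rcases eq_or_ne e s(x,a) with rfl | A1
    · rw [if_pos rfl, if_neg E12, if_neg E13, if_neg E14]; omega
    rcases eq_or_ne e s(x,b) with rfl | A2
    · rw [if_neg (Ne.symm E12), if_pos rfl, if_neg E23, if_neg E24]; omega
    rcases eq_or_ne e s(a,b) with rfl | A3
    · rw [if_neg (Ne.symm E13), if_neg (Ne.symm E23), if_pos rfl, if_neg E34]; omega
    rcases eq_or_ne e s(c,d) with rfl | A4
    · rw [if_neg (Ne.symm E14), if_neg (Ne.symm E24), if_neg (Ne.symm E34), if_pos rfl]; omega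
    · rw [if_neg A1, if_neg A2, if_neg A3, if_neg A4]; omega
  · intro e he
    have A1 : e ≠ s(x,a) := fun hh => he (hh ▸ M1)
    have A2 : e ≠ s(x,b) := fun hh => he (hh ▸ M2)
    have A3 : e ≠ s(a,b) := fun hh => he (hh ▸ M3)
    have A4 : e ≠ s(c,d) := fun hh => he (hh ▸ M4)
    dsimp only
    rw [if_neg A1, if_neg A2, if_neg A3, if_neg A4]
  all_goals {
    have vx : vsum (fun e => (if e = s(x,a) then m else 0) + (if e = s(x,b) then m else 0)
        + (if e = s(a,b) then m+1 else 0) + (if e = s(c,d) then k else 0)) x = 2*m := by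
      rw [vsum_four]; simp [Sym2.mem_iff, hxa, hxb, hxc, hxd]; omega
    have va : vsum (fun e => (if e = s(x,a) then m else 0) + (if e = s(x,b) then m else 0)
        + (if e = s(a,b) then m+1 else 0) + (if e = s(c,d) then k else 0)) a = k := by
      rw [vsum_four]; simp [Sym2.mem_iff, hxa.symm, hab, hac, had]; omega
    have vb : vsum (fun e => (if e = s(x,a) then m else 0) + (if e = s(x,b) then m else 0)
        + (if e = s(a,b) then m+1 else 0) + (if e = s(c,d) then k else 0)) b = k := by
      rw [vsum_four]; simp [Sym2.mem_iff, hxb.symm, hab.symm, hbc, hbd]; omega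
    have vc : vsum (fun e => (if e = s(x,a) then m else 0) + (if e = s(x,b) then m else 0)
        + (if e = s(a,b) then m+1 else 0) + (if e = s(c,d) then k else 0)) c = k := by
      rw [vsum_four]; simp [Sym2.mem_iff, hxc.symm, hac.symm, hbc.symm, hcd]
    have vd : vsum (fun e => (if e = s(x,a) then m else 0) + (if e = s(x,b) then m else 0)
        + (if e = s(a,b) then m+1 else 0) + (if e = s(c,d) then k else 0)) d = k := by
      rw [vsum_four]; simp [Sym2.mem_iff, hxd.symm, had.symm, hbd.symm, hcd.symm]
    first
    | (intro v; rcases hall v with rfl | rfl | rfl | rfl | rfl <;> omega)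
    | omega
    | (intro v hv
       rcases hall v with rfl | rfl | rfl | rfl | rfl
       · exact absurd rfl hv
       all_goals assumption)
  }

end IntKM

namespace IntKM

lemma tri_facts (k : ℕ) (h : Sym2 (Fin 5) → ℕ)
    (hm : IsIntKMatching ((⊤ : SimpleGraph (Fin 5)).deleteEdges
      {s((0:Fin 5),(1:Fin 5)), s((0:Fin 5),(2:Fin 5)), s((1:Fin 5),(2:Fin 5))}) k h) :
    vsum h 0 + vsum h 1 + vsum h 2 ≤ vsum h 3 + vsum h 4 := by
  have hz : ∀ e : Sym2 (Fin 5), (e.IsDiag ∨ e ∈ ({s((0:Fin 5),(1:Fin 5)), s((0:Fin 5),(2:Fin 5)),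
      s((1:Fin 5),(2:Fin 5))} : Set (Sym2 (Fin 5)))) → h e = 0 := by
    intro e he
    apply hm.2.1
    rw [SimpleGraph.edgeSet_deleteEdges, SimpleGraph.edgeSet_top]
    rintro ⟨hd, hmem⟩
    rcases he with he | he
    · exact hd he
    · exact hmem he
  have z00 : h s((0:Fin 5),(0:Fin 5)) = 0 := hz _ (Or.inl (by decide))
  have z11 : h s((1:Fin 5),(1:Fin 5)) = 0 := hz _ (Or.inl (by decide))
  have z22 : h s((2:Fin 5),(2:Fin 5)) = 0 := hz _ (Or.inl (by decide))
  have z33 : h s((3:Fin 5),(3:Fin 5)) = 0 := hz _ (Or.inl (by decide))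
  have z01 : h s((0:Fin 5),(1:Fin 5)) = 0 := hz _ (Or.inr (by left; rfl))
  have z02 : h s((0:Fin 5),(2:Fin 5)) = 0 := hz _ (Or.inr (by right; left; rfl))
  have z12 : h s((1:Fin 5),(2:Fin 5)) = 0 := hz _ (Or.inr (by right; right; rfl))
  have w10 : h s((1:Fin 5),(0:Fin 5)) = h s((0:Fin 5),(1:Fin 5)) := congrArg h Sym2.eq_swap
  have w20 : h s((2:Fin 5),(0:Fin 5)) = h s((0:Fin 5),(2:Fin 5)) := congrArg h Sym2.eq_swap
  have w21 : h s((2:Fin 5),(1:Fin 5)) = h s((1:Fin 5),(2:Fin 5)) := congrArg h Sym2.eq_swap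
  have w30 : h s((3:Fin 5),(0:Fin 5)) = h s((0:Fin 5),(3:Fin 5)) := congrArg h Sym2.eq_swap
  have w31 : h s((3:Fin 5),(1:Fin 5)) = h s((1:Fin 5),(3:Fin 5)) := congrArg h Sym2.eq_swap
  have w32 : h s((3:Fin 5),(2:Fin 5)) = h s((2:Fin 5),(3:Fin 5)) := congrArg h Sym2.eq_swap
  have w40 : h s((4:Fin 5),(0:Fin 5)) = h s((0:Fin 5),(4:Fin 5)) := congrArg h Sym2.eq_swap
  have w41 : h s((4:Fin 5),(1:Fin 5)) = h s((1:Fin 5),(4:Fin 5)) := congrArg h Sym2.eq_swap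
  have w42 : h s((4:Fin 5),(2:Fin 5)) = h s((2:Fin 5),(4:Fin 5)) := congrArg h Sym2.eq_swap
  have w43 : h s((4:Fin 5),(3:Fin 5)) = h s((3:Fin 5),(4:Fin 5)) := congrArg h Sym2.eq_swap
  have E : ∀ i : Fin 5, vsum h i = h s(i,0) + h s(i,1) + h s(i,2) + h s(i,3) + h s(i,4) := by
    intro i
    rw [vsum_eq_sum, Fin.sum_univ_five]
  have E0 := E 0; have E1 := E 1; have E2 := E 2; have E3 := E 3; have E4 := E 4
  omega

end IntKM

namespace IntKM

lemma noPA (k : ℕ) (hk3 : 3 ≤ k) :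
    ¬ HasPerfect ((⊤ : SimpleGraph (Fin 5)).deleteEdges
      {s((0:Fin 5),(1:Fin 5)), s((0:Fin 5),(2:Fin 5)), s((1:Fin 5),(2:Fin 5))}) k ∧
    ¬ HasAlmost ((⊤ : SimpleGraph (Fin 5)).deleteEdges
      {s((0:Fin 5),(1:Fin 5)), s((0:Fin 5),(2:Fin 5)), s((1:Fin 5),(2:Fin 5))}) k := by
  constructor
  · rintro ⟨h, hm, hall⟩
    have key := tri_facts k h hm
    have b3 := hm.2.2 3
    have b4 := hm.2.2 4
    have q0 := hall 0; have q1 := hall 1; have q2 := hall 2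
    omega
  · rintro ⟨h, hm, v', hv', hall⟩
    have key := tri_facts k h hm
    have b3 := hm.2.2 3
    have b4 := hm.2.2 4
    have B : ∀ i : Fin 5, vsum h i = k ∨ vsum h i = k - 1 := fun i => by
      by_cases hi : i = v'
      · exact Or.inr (hi ▸ hv')
      · exact Or.inl (hall i hi)
    have P : ∀ i j : Fin 5, i ≠ j → vsum h i = k ∨ vsum h j = k := fun i j hij => by
      by_cases hi : i = v'
      · exact Or.inr (hall j (fun hj => hij (hi.trans hj.symm)))
      · exact Or.inl (hall i hi)
    rcases B 0 with b0 | b0 <;> rcases B 1 with b1 | b1 <;> rcases B 2 with b2 | b2 <;>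
      rcases P 0 1 (by decide) with p01 | p01 <;> rcases P 0 2 (by decide) with p02 | p02 <;>
      rcases P 1 2 (by decide) with p12 | p12 <;> omega

lemma almost_of_small (k m : ℕ) (hm : k = 2*m+1) (F : Finset (Sym2 (Fin 5)))
    (hsub : ↑F ⊆ (⊤ : SimpleGraph (Fin 5)).edgeSet) (hc : F.card ≤ 2) :
    HasAlmost ((⊤ : SimpleGraph (Fin 5)).deleteEdges ↑F) k := by
  have hnd : ∀ e ∈ F, ¬ e.IsDiag := fun e he => by
    have := hsub he
    rw [SimpleGraph.edgeSet_top] at this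
    exact this
  obtain ⟨e1, e2, h1, h2, hFsub⟩ : ∃ e1 e2 : Sym2 (Fin 5), ¬e1.IsDiag ∧ ¬e2.IsDiag ∧
      (↑F : Set (Sym2 (Fin 5))) ⊆ {e1, e2} := by
    by_cases h0 : F.card = 0
    · obtain rfl := Finset.card_eq_zero.mp h0
      exact ⟨s(0,1), s(0,1), by decide, by decide, by simp⟩
    by_cases hone : F.card = 1
    · obtain ⟨e, rfl⟩ := Finset.card_eq_one.mp hone
      exact ⟨e, e, hnd e (by simp), hnd e (by simp), by intro x hx; simp at hx; simp [hx]⟩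
    · have h2' : F.card = 2 := by omega
      obtain ⟨e1, e2, hne, rfl⟩ := Finset.card_eq_two.mp h2'
      exact ⟨e1, e2, hnd e1 (by simp), hnd e2 (by simp), by intro x hx; simpa using hx⟩
  exact hasAlmost_mono (SimpleGraph.deleteEdges_anti hFsub) (core k m hm e1 e2 h1 h2)

end IntKM

open IntKM

theorem stmt9 (k : ℕ) (hk : Odd k) (hk3 : 3 ≤ k) :
    mpk (⊤ : SimpleGraph (Fin 5)) k = 3 ∧
    (∀ F : Finset (Sym2 (Fin 5)), ↑F ⊆ (⊤ : SimpleGraph (Fin 5)).edgeSet → F.card = 2 →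
      HasAlmost ((⊤ : SimpleGraph (Fin 5)).deleteEdges ↑F) k) ∧
    (∃ u v w : Fin 5, u ≠ v ∧ u ≠ w ∧ v ≠ w ∧
      ¬ HasPerfect ((⊤ : SimpleGraph (Fin 5)).deleteEdges {s(u, v), s(u, w), s(v, w)}) k ∧
      ¬ HasAlmost ((⊤ : SimpleGraph (Fin 5)).deleteEdges {s(u, v), s(u, w), s(v, w)}) k) := by
  obtain ⟨m, hmk⟩ := hk
  have hmk' : k = 2*m+1 := by omega
  refine ⟨?_, fun F hF hc => almost_of_small k m hmk' F hF (le_of_eq hc),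
    0, 1, 2, by decide, by decide, by decide, (noPA k hk3).1, (noPA k hk3).2⟩
  have hcoe : ((↑({s((0:Fin 5),(1:Fin 5)), s((0:Fin 5),(2:Fin 5)), s((1:Fin 5),(2:Fin 5))} :
      Finset (Sym2 (Fin 5)))) : Set (Sym2 (Fin 5))) =
      {s((0:Fin 5),(1:Fin 5)), s((0:Fin 5),(2:Fin 5)), s((1:Fin 5),(2:Fin 5))} := by simp
  have mem3 : 3 ∈ {n | ∃ F : Finset (Sym2 (Fin 5)),
      ↑F ⊆ (⊤ : SimpleGraph (Fin 5)).edgeSet ∧ F.card = n ∧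
      ¬ HasPerfect ((⊤ : SimpleGraph (Fin 5)).deleteEdges ↑F) k ∧
      ¬ HasAlmost ((⊤ : SimpleGraph (Fin 5)).deleteEdges ↑F) k} := by
    refine ⟨{s((0:Fin 5),(1:Fin 5)), s((0:Fin 5),(2:Fin 5)), s((1:Fin 5),(2:Fin 5))}, ?_, by decide, ?_, ?_⟩
    · rw [SimpleGraph.edgeSet_top]
      intro e he
      simp only [Finset.coe_insert, Set.mem_insert_iff, Finset.coe_singleton,
        Set.mem_singleton_iff] at he
      rcases he with rfl | rfl | rfl <;> decide
    · rw [hcoe]; exact (noPA k hk3).1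
    · rw [hcoe]; exact (noPA k hk3).2
  refine le_antisymm (Nat.sInf_le mem3) (le_csInf ⟨3, mem3⟩ ?_)
  rintro n ⟨F, hF, rfl, hP, hA⟩
  by_contra hlt
  push_neg at hlt
  exact hA (almost_of_small k m hmk' F hF (by omega))
end

section
/- Let G be a bipartite graph and k a positive integer. If h is a maximum integer k-matching of G chosen with the maximum number of edges e with h(e) = 0, then the set of edges e with h(e) ≠ 0 forms a matching in G. -/
open SimpleGraph Finset

open IntKM

section AuxKM

variable {V : Type*} [Fintype V] [DecidableEq V]

/-- Hall-type step: from a minimum vertex cover `C` of the support of `h`, the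
vertices of `C` on side `P` of the bipartition can be matched injectively into
support-neighbors outside `C`. -/
lemma hall_step_km (h : Sym2 V → ℕ) (C : Finset V) (P : V → Prop)
    (hbi : ∀ x y : V, h s(x, y) ≠ 0 → (P x ↔ ¬ P y))
    (hcov : ∀ e, h e ≠ 0 → ∃ v ∈ C, v ∈ e)
    (hmin : ∀ C' : Finset V, (∀ e, h e ≠ 0 → ∃ v ∈ C', v ∈ e) → C.card ≤ C'.card) :
    ∃ f : {a : V // a ∈ C ∧ P a} → V, Function.Injective f ∧
      ∀ a, f a ∉ C ∧ h s(a.1, f a) ≠ 0 := by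
  classical
  set t : {a : V // a ∈ C ∧ P a} → Finset V :=
    fun a => Finset.univ.filter (fun b => b ∉ C ∧ h s(a.1, b) ≠ 0) with ht
  have hall : ∀ s : Finset {a : V // a ∈ C ∧ P a}, s.card ≤ (s.biUnion t).card := by
    intro s
    by_contra hlt
    push_neg at hlt
    set S : Finset V := s.image Subtype.val with hS
    have hSsub : S ⊆ C := by
      intro v hv
      rw [hS, Finset.mem_image] at hv
      obtain ⟨a, _, rfl⟩ := hv
      exact a.2.1
    have hScard : S.card = s.card := Finset.card_image_of_injective s Subtype.val_injective
    set C' : Finset V := (C \ S) ∪ s.biUnion t with hC'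
    have key : ∀ x y : V, h s(x, y) ≠ 0 → x ∈ C → (x ∈ C' ∨ y ∈ C') := by
      intro x y hxy hxC
      by_cases hxS : x ∈ S
      · rw [hS, Finset.mem_image] at hxS
        obtain ⟨a, has, hav⟩ := hxS
        have hPx : P x := hav ▸ a.2.2
        have hPy : ¬ P y := (hbi x y hxy).mp hPx
        by_cases hyC : y ∈ C
        · right
          apply Finset.mem_union_left
          rw [Finset.mem_sdiff]
          refine ⟨hyC, ?_⟩
          intro hyS
          rw [hS, Finset.mem_image] at hyS
          obtain ⟨b, _, hbv⟩ := hyS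
          exact hPy (hbv ▸ b.2.2)
        · right
          apply Finset.mem_union_right
          rw [Finset.mem_biUnion]
          refine ⟨a, has, ?_⟩
          rw [ht]
          simp only [Finset.mem_filter, Finset.mem_univ, true_and]
          exact ⟨hyC, by rw [hav]; exact hxy⟩
      · left
        exact Finset.mem_union_left _ (Finset.mem_sdiff.mpr ⟨hxC, hxS⟩)
    have hcov' : ∀ e, h e ≠ 0 → ∃ v ∈ C', v ∈ e := by
      intro e he
      induction e using Sym2.ind with
      | _ x y =>
        obtain ⟨v, hvC, hve⟩ := hcov _ he
        rw [Sym2.mem_iff] at hve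
        rcases hve with rfl | rfl
        · rcases key v y he hvC with hv | hy
          · exact ⟨v, hv, Sym2.mem_mk_left _ _⟩
          · exact ⟨y, hy, Sym2.mem_mk_right _ _⟩
        · have he' : h s(v, x) ≠ 0 := by rwa [Sym2.eq_swap]
          rcases key v x he' hvC with hv | hx
          · exact ⟨v, hv, Sym2.mem_mk_right _ _⟩
          · exact ⟨x, hx, Sym2.mem_mk_left _ _⟩
    have h1 : C.card ≤ C'.card := hmin C' hcov'
    have h2 : C'.card ≤ (C \ S).card + (s.biUnion t).card := Finset.card_union_le _ _
    have h3 : (C \ S).card = C.card - S.card := Finset.card_sdiff_of_subset hSsub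
    have h4 : S.card ≤ C.card := Finset.card_le_card hSsub
    omega
  obtain ⟨f, hinj, hf⟩ := (Finset.all_card_le_biUnion_card_iff_exists_injective t).mp hall
  refine ⟨f, hinj, fun a => ?_⟩
  have := hf a
  rw [ht] at this
  simp only [Finset.mem_filter, Finset.mem_univ, true_and] at this
  exact this

end AuxKM

theorem stmt13 {V : Type*} [Fintype V] [DecidableEq V] (G : SimpleGraph V)
    (hbip : G.Colorable 2) (k : ℕ) (hk : 0 < k) (h : Sym2 V → ℕ)
    (hm : IsIntKMatching G k h)
    (hmax : ∀ h' : Sym2 V → ℕ, IsIntKMatching G k h' → totalWeight h' ≤ totalWeight h)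
    (hzero : ∀ h' : Sym2 V → ℕ, IsIntKMatching G k h' → totalWeight h' = totalWeight h →
      (Finset.univ.filter (fun e => h' e = 0)).card ≤
        (Finset.univ.filter (fun e => h e = 0)).card) :
    IsMatchingSet G (Finset.univ.filter (fun e => h e ≠ 0)) := by
  classical
  obtain ⟨c⟩ := hbip
  -- every edge with nonzero weight is an edge of G
  have hedge : ∀ x y : V, h s(x, y) ≠ 0 → G.Adj x y := by
    intro x y hxy
    by_contra hadj
    exact hxy (hm.2.1 _ (fun hmem => hadj (G.mem_edgeSet.1 hmem)))
  -- bipartition facts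
  have hbi0 : ∀ x y : V, h s(x, y) ≠ 0 → ((c x = 0) ↔ ¬ (c y = 0)) := by
    intro x y hxy
    have hne : c x ≠ c y := c.valid (hedge x y hxy)
    revert hne
    exact (by decide : ∀ i j : Fin 2, i ≠ j → (i = 0 ↔ ¬ j = 0)) (c x) (c y)
  have hbi1 : ∀ x y : V, h s(x, y) ≠ 0 → (¬ (c x = 0) ↔ ¬ ¬ (c y = 0)) := by
    intro x y hxy
    have := hbi0 y x (by rwa [Sym2.eq_swap])
    tauto
  -- a minimum vertex cover of the support
  set cov : Finset V → Prop := fun C => ∀ e, h e ≠ 0 → ∃ v ∈ C, v ∈ e with hcovdef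
  have hcovuniv : cov Finset.univ := by
    intro e _
    induction e using Sym2.ind with
    | _ x y => exact ⟨x, Finset.mem_univ x, Sym2.mem_mk_left _ _⟩
  have hne : (Finset.univ.filter cov : Finset (Finset V)).Nonempty :=
    ⟨Finset.univ, Finset.mem_filter.mpr ⟨Finset.mem_univ _, hcovuniv⟩⟩
  obtain ⟨C, hCmem, hCmin0⟩ := Finset.exists_min_image _ Finset.card hne
  have hCcov : cov C := (Finset.mem_filter.mp hCmem).2
  have hCmin : ∀ C' : Finset V, (∀ e, h e ≠ 0 → ∃ v ∈ C', v ∈ e) → C.card ≤ C'.card :=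
    fun C' hc => hCmin0 C' (Finset.mem_filter.mpr ⟨Finset.mem_univ _, hc⟩)
  -- Hall matchings on each side
  obtain ⟨f, finj, hf⟩ := hall_step_km h C (fun v => c v = 0) hbi0 hCcov hCmin
  obtain ⟨g, ginj, hg⟩ := hall_step_km h C (fun v => ¬ (c v = 0)) hbi1 hCcov hCmin
  -- the matching M
  set M₁ : Finset (Sym2 V) :=
    Finset.univ.image (fun a : {a : V // a ∈ C ∧ c a = 0} => s(a.1, f a)) with hM₁
  set M₂ : Finset (Sym2 V) :=
    Finset.univ.image (fun b : {b : V // b ∈ C ∧ ¬ (c b = 0)} => s(b.1, g b)) with hM₂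
  set M : Finset (Sym2 V) := M₁ ∪ M₂ with hM
  have hfc : ∀ a : {a : V // a ∈ C ∧ c a = 0}, ¬ (c (f a) = 0) :=
    fun a => (hbi0 a.1 (f a) (hf a).2).mp a.2.2
  have hgc : ∀ b : {b : V // b ∈ C ∧ ¬ (c b = 0)}, c (g b) = 0 :=
    fun b => not_not.mp ((hbi1 b.1 (g b) (hg b).2).mp b.2.2)
  -- M consists of edges of nonzero weight
  have hMne : ∀ e ∈ M, h e ≠ 0 := by
    intro e he
    rw [hM, Finset.mem_union] at he
    rcases he with he | he
    · rw [hM₁, Finset.mem_image] at he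
      obtain ⟨a, _, rfl⟩ := he
      exact (hf a).2
    · rw [hM₂, Finset.mem_image] at he
      obtain ⟨b, _, rfl⟩ := he
      exact (hg b).2
  -- M is a matching: pairwise disjoint edges
  have hMdisj : ∀ e₁ ∈ M, ∀ e₂ ∈ M, e₁ ≠ e₂ → ∀ v : V, v ∈ e₁ → v ∉ e₂ := by
    intro e₁ he₁ e₂ he₂ hne12 v hv₁ hv₂
    rw [hM, Finset.mem_union] at he₁ he₂
    have mem1 : ∀ (x y v : V), v ∈ s(x, y) → v = x ∨ v = y := by
      intro x y v hv; rwa [Sym2.mem_iff] at hv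
    rcases he₁ with he₁ | he₁ <;> rcases he₂ with he₂ | he₂
    · rw [hM₁, Finset.mem_image] at he₁ he₂
      obtain ⟨a₁, _, rfl⟩ := he₁; obtain ⟨a₂, _, rfl⟩ := he₂
      rcases mem1 _ _ _ hv₁ with rfl | rfl <;> rcases mem1 _ _ _ hv₂ with h2 | h2
      · exact hne12 (by have he : _ = _ := Subtype.ext h2; rw [he])
      · exact (hf a₂).1 (h2 ▸ a₁.2.1)
      · exact (hf a₁).1 (h2 ▸ a₂.2.1)
      · exact hne12 (by have he : a₁ = a₂ := finj h2; rw [he])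
    · rw [hM₁, Finset.mem_image] at he₁
      rw [hM₂, Finset.mem_image] at he₂
      obtain ⟨a, _, rfl⟩ := he₁; obtain ⟨b, _, rfl⟩ := he₂
      rcases mem1 _ _ _ hv₁ with rfl | rfl <;> rcases mem1 _ _ _ hv₂ with h2 | h2
      · exact b.2.2 (h2 ▸ a.2.2)
      · exact (hg b).1 (h2 ▸ a.2.1)
      · exact (hf a).1 (h2 ▸ b.2.1)
      · exact (hfc a) (h2 ▸ hgc b)
    · rw [hM₂, Finset.mem_image] at he₁
      rw [hM₁, Finset.mem_image] at he₂
      obtain ⟨b, _, rfl⟩ := he₁; obtain ⟨a, _, rfl⟩ := he₂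
      rcases mem1 _ _ _ hv₁ with rfl | rfl <;> rcases mem1 _ _ _ hv₂ with h2 | h2
      · exact b.2.2 (by rw [h2]; exact a.2.2)
      · exact (hf a).1 (h2 ▸ b.2.1)
      · exact (hg b).1 (h2 ▸ a.2.1)
      · exact (hfc a) (by rw [← h2]; exact hgc b)
    · rw [hM₂, Finset.mem_image] at he₁ he₂
      obtain ⟨b₁, _, rfl⟩ := he₁; obtain ⟨b₂, _, rfl⟩ := he₂
      rcases mem1 _ _ _ hv₁ with rfl | rfl <;> rcases mem1 _ _ _ hv₂ with h2 | h2
      · exact hne12 (by have he : _ = _ := Subtype.ext h2; rw [he])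
      · exact (hg b₂).1 (h2 ▸ b₁.2.1)
      · exact (hg b₁).1 (h2 ▸ b₂.2.1)
      · exact hne12 (by have he : b₁ = b₂ := ginj h2; rw [he])
  -- card M = card C
  have hMcard : M.card = C.card := by
    have hinj₁ : Function.Injective (fun a : {a : V // a ∈ C ∧ c a = 0} => s(a.1, f a)) := by
      intro a a' heq
      simp only [Sym2.eq_iff] at heq
      rcases heq with ⟨h1, h2⟩ | ⟨h1, h2⟩
      · exact Subtype.ext h1
      · exact absurd (h1 ▸ a.2.1) (hf a').1
    have hinj₂ : Function.Injective (fun b : {b : V // b ∈ C ∧ ¬ (c b = 0)} => s(b.1, g b)) := by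
      intro b b' heq
      simp only [Sym2.eq_iff] at heq
      rcases heq with ⟨h1, h2⟩ | ⟨h1, h2⟩
      · exact Subtype.ext h1
      · exact absurd (h1 ▸ b.2.1) (hg b').1
    have hdisj : Disjoint M₁ M₂ := by
      rw [Finset.disjoint_left]
      intro e he₁ he₂
      rw [hM₁, Finset.mem_image] at he₁
      rw [hM₂, Finset.mem_image] at he₂
      obtain ⟨a, _, rfl⟩ := he₁
      obtain ⟨b, _, heq⟩ := he₂
      rw [Sym2.eq_iff] at heq
      rcases heq with ⟨h1, h2⟩ | ⟨h1, h2⟩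
      · exact b.2.2 (h1 ▸ a.2.2)
      · exact (hg b).1 (h2 ▸ a.2.1)
    have hc₁ : M₁.card = (C.filter (fun v => c v = 0)).card := by
      rw [hM₁, Finset.card_image_of_injective _ hinj₁, Finset.card_univ,
        Fintype.card_subtype]
      congr 1
      ext v
      simp [and_comm]
    have hc₂ : M₂.card = (C.filter (fun v => ¬ (c v = 0))).card := by
      rw [hM₂, Finset.card_image_of_injective _ hinj₂, Finset.card_univ,
        Fintype.card_subtype]
      congr 1
      ext v
      simp [and_comm]
    rw [hM, Finset.card_union_of_disjoint hdisj, hc₁, hc₂,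
      Finset.card_filter_add_card_filter_not]
  -- cover bound : totalWeight h ≤ k * C.card
  have hWcover : totalWeight h ≤ k * C.card := by
    have step1 : totalWeight h ≤ ∑ e : Sym2 V, (C.filter (fun v => v ∈ e)).card * h e := by
      apply Finset.sum_le_sum
      intro e _
      by_cases he : h e = 0
      · simp [he]
      · obtain ⟨v, hvC, hve⟩ := hCcov e he
        have : 0 < (C.filter (fun v => v ∈ e)).card :=
          Finset.card_pos.mpr ⟨v, Finset.mem_filter.mpr ⟨hvC, hve⟩⟩
        calc h e = 1 * h e := (one_mul _).symm
        _ ≤ _ := Nat.mul_le_mul_right _ this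
    have step2 : ∑ e : Sym2 V, (C.filter (fun v => v ∈ e)).card * h e
        = ∑ v ∈ C, vsum h v := by
      have : ∀ v, vsum h v = ∑ e : Sym2 V, if v ∈ e then h e else 0 := by
        intro v
        rw [vsum, Finset.sum_filter]
      simp_rw [this]
      rw [Finset.sum_comm]
      apply Finset.sum_congr rfl
      intro e _
      rw [← Finset.sum_filter, Finset.sum_const, smul_eq_mul]
    have step3 : ∑ v ∈ C, vsum h v ≤ ∑ v ∈ C, k :=
      Finset.sum_le_sum (fun v _ => hm.2.2 v)
    rw [Finset.sum_const, smul_eq_mul] at step3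
    have hmm : C.card * k = k * C.card := Nat.mul_comm _ _
    omega
  -- the comparison k-matching h₀
  set h₀ : Sym2 V → ℕ := fun e => if e ∈ M then k else 0 with hh₀
  have hm₀ : IsIntKMatching G k h₀ := by
    have hMsub : ∀ e, h e ≠ 0 → e ∈ G.edgeSet := by
      intro e
      induction e using Sym2.ind with
      | _ x y => exact fun h0 => G.mem_edgeSet.mpr (hedge x y h0)
    refine ⟨fun e => ?_, fun e he => ?_, fun v => ?_⟩
    · simp only [hh₀]; split <;> omega
    · simp only [hh₀, ite_eq_right_iff]
      intro heM
      exact absurd (hMsub e (hMne e heM)) he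
    · rw [vsum]
      have : ∀ e ∈ Finset.univ.filter (fun e : Sym2 V => v ∈ e), h₀ e =
          if e ∈ M then k else 0 := fun e _ => rfl
      rw [Finset.sum_congr rfl this, Finset.sum_ite_mem]
      have hle1 : ((Finset.univ.filter (fun e : Sym2 V => v ∈ e)) ∩ M).card ≤ 1 := by
        rw [Finset.card_le_one]
        intro e₁ he₁ e₂ he₂
        rw [Finset.mem_inter, Finset.mem_filter] at he₁ he₂
        by_contra hne'
        exact hMdisj e₁ he₁.2 e₂ he₂.2 hne' v he₁.1.2 he₂.1.2
      calc ∑ _e ∈ (Finset.univ.filter (fun e : Sym2 V => v ∈ e)) ∩ M, k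
          = ((Finset.univ.filter (fun e : Sym2 V => v ∈ e)) ∩ M).card * k := by
            rw [Finset.sum_const, smul_eq_mul]
        _ ≤ 1 * k := Nat.mul_le_mul_right _ hle1
        _ = k := one_mul _
  have hW₀ : totalWeight h₀ = k * M.card := by
    simp only [totalWeight, hh₀]
    rw [Finset.sum_ite_mem, Finset.univ_inter, Finset.sum_const, smul_eq_mul, Nat.mul_comm]
  -- totalWeight h = k * M.card
  have hWeq : totalWeight h = k * M.card := by
    have h1 := hmax h₀ hm₀
    rw [hW₀, hMcard] at h1
    rw [hMcard]
    omega
  -- zero count comparison gives |supp| ≤ |M|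
  set supp : Finset (Sym2 V) := Finset.univ.filter (fun e => h e ≠ 0) with hsupp
  have hsuppM : supp.card ≤ M.card := by
    have h1 := hzero h₀ hm₀ (by rw [hW₀, hWeq])
    have h4 : Finset.univ.filter (fun e => ¬ (h₀ e = 0)) = M := by
      ext e
      simp only [Finset.mem_filter, Finset.mem_univ, true_and, hh₀]
      constructor
      · intro hne'
        by_contra heM
        simp [heM] at hne'
      · intro heM
        simp only [heM, if_true]
        omega
    have h5 : Finset.univ.filter (fun e => ¬ (h e = 0)) = supp := by
      ext e
      simp [hsupp]
    have h2 : (Finset.univ.filter (fun e => h₀ e = 0)).card + M.card =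
        Fintype.card (Sym2 V) := by
      rw [← h4, ← Finset.card_univ]
      exact Finset.card_filter_add_card_filter_not _
    have h3 : (Finset.univ.filter (fun e => h e = 0)).card + supp.card =
        Fintype.card (Sym2 V) := by
      rw [← h5, ← Finset.card_univ]
      exact Finset.card_filter_add_card_filter_not _
    omega
  -- every support edge has weight exactly k
  have hallk : ∀ e, h e ≠ 0 → h e = k := by
    have hW1 : totalWeight h = ∑ e ∈ supp, h e := by
      rw [totalWeight, hsupp, Finset.sum_filter_ne_zero]
    have hW2 : ∑ e ∈ supp, h e ≤ ∑ e ∈ supp, k :=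
      Finset.sum_le_sum (fun e _ => hm.1 e)
    rw [Finset.sum_const, smul_eq_mul] at hW2
    have hcard : supp.card * k ≤ k * M.card := by
      calc supp.card * k ≤ M.card * k := Nat.mul_le_mul_right _ hsuppM
        _ = k * M.card := Nat.mul_comm _ _
    have heq : ∑ e ∈ supp, h e = ∑ e ∈ supp, k := by
      rw [Finset.sum_const, smul_eq_mul]
      omega
    intro e he
    have := (Finset.sum_eq_sum_iff_of_le (fun e _ => hm.1 e)).mp heq e
      (Finset.mem_filter.mpr ⟨Finset.mem_univ _, he⟩)
    exact this
  -- conclude: the support is a matching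
  constructor
  · intro e he
    rw [Finset.coe_filter] at he
    obtain ⟨_, hne'⟩ := he
    induction e using Sym2.ind with
    | _ x y => exact G.mem_edgeSet.mpr (hedge x y hne')
  · intro e₁ he₁ e₂ he₂ hne12 v hv₁ hv₂
    rw [Finset.mem_filter] at he₁ he₂
    have hk₁ : h e₁ = k := hallk e₁ he₁.2
    have hk₂ : h e₂ = k := hallk e₂ he₂.2
    have hsub : {e₁, e₂} ⊆ Finset.univ.filter (fun e : Sym2 V => v ∈ e) := by
      intro e he
      rw [Finset.mem_insert, Finset.mem_singleton] at he
      rcases he with rfl | rfl <;>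
        exact Finset.mem_filter.mpr ⟨Finset.mem_univ _, by assumption⟩
    have hsum : h e₁ + h e₂ ≤ vsum h v := by
      rw [vsum, ← Finset.sum_pair hne12]
      exact Finset.sum_le_sum_of_subset hsub
    have := hm.2.2 v
    omega
end

section
/- For every bipartite graph G and positive integer k, the integer k-matching number satisfies μ_k(G) = k·μ(G), where μ_k(G) is the maximum total weight of an integer k-matching and μ(G) is the matching number. -/
open SimpleGraph Finset

open IntKM

namespace IntKM

variable {V : Type*} [Fintype V] [DecidableEq V]

lemma exists_matching_cover (G : SimpleGraph V) (c : G.Coloring (Fin 2)) :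
    ∃ (M : Finset (Sym2 V)) (C : Finset V), IsMatchingSet G M ∧
      (∀ e ∈ G.edgeSet, ∃ v ∈ C, v ∈ e) ∧ C.card ≤ M.card := by
  classical
  set A : Finset V := univ.filter (fun v => c v = 0) with hA
  set Nb : Finset V → Finset V := fun S => univ.filter (fun b => ∃ a ∈ S, G.Adj a b) with hNb
  set d : ℕ := (A.powerset).sup (fun S => S.card - (Nb S).card) with hd
  set t : ↥A → Finset (V ⊕ Fin d) := fun a =>
    (univ.filter (fun b => G.Adj a.1 b)).image Sum.inl ∪ (univ : Finset (Fin d)).image Sum.inr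
    with ht
  have hall : ∀ s : Finset ↥A, s.card ≤ (s.biUnion t).card := by
    intro s
    rcases s.eq_empty_or_nonempty with rfl | ⟨a0, ha0⟩
    · simp
    have h1 : s.biUnion t =
        (Nb (s.image Subtype.val)).image Sum.inl ∪ (univ : Finset (Fin d)).image Sum.inr := by
      ext x
      constructor
      · intro hx
        obtain ⟨a, ha, hx⟩ := Finset.mem_biUnion.1 hx
        rcases Finset.mem_union.1 hx with hx | hx
        · obtain ⟨b, hb, rfl⟩ := Finset.mem_image.1 hx
          refine Finset.mem_union_left _ (Finset.mem_image.2 ⟨b, ?_, rfl⟩)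
          exact Finset.mem_filter.2 ⟨Finset.mem_univ _,
            ⟨a.1, Finset.mem_image.2 ⟨a, ha, rfl⟩, (Finset.mem_filter.1 hb).2⟩⟩
        · exact Finset.mem_union_right _ hx
      · intro hx
        rcases Finset.mem_union.1 hx with hx | hx
        · obtain ⟨b, hb, rfl⟩ := Finset.mem_image.1 hx
          obtain ⟨-, a1, ha1, hadj⟩ := Finset.mem_filter.1 hb
          obtain ⟨a, ha, rfl⟩ := Finset.mem_image.1 ha1
          exact Finset.mem_biUnion.2 ⟨a, ha, Finset.mem_union_left _
            (Finset.mem_image.2 ⟨b, Finset.mem_filter.2 ⟨Finset.mem_univ _, hadj⟩, rfl⟩)⟩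
        · exact Finset.mem_biUnion.2 ⟨a0, ha0, Finset.mem_union_right _ hx⟩
    have hdisj : Disjoint ((Nb (s.image Subtype.val)).image (Sum.inl : V → V ⊕ Fin d))
        ((univ : Finset (Fin d)).image Sum.inr) := by
      simp [Finset.disjoint_left]
    have hcard : (s.biUnion t).card = (Nb (s.image Subtype.val)).card + d := by
      rw [h1, Finset.card_union_of_disjoint hdisj,
        Finset.card_image_of_injective _ Sum.inl_injective,
        Finset.card_image_of_injective _ Sum.inr_injective, Finset.card_univ, Fintype.card_fin]
    have hsub : s.image Subtype.val ∈ A.powerset := by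
      rw [Finset.mem_powerset]
      intro x hx
      obtain ⟨a, _, rfl⟩ := Finset.mem_image.1 hx
      exact a.2
    have hle : (s.image Subtype.val).card - (Nb (s.image Subtype.val)).card ≤ d :=
      Finset.le_sup (f := fun S => S.card - (Nb S).card) hsub
    have hsc : (s.image Subtype.val).card = s.card :=
      Finset.card_image_of_injective _ Subtype.val_injective
    omega
  obtain ⟨f, hfinj, hft⟩ := (Finset.all_card_le_biUnion_card_iff_exists_injective t).1 hall
  set P : Finset ↥A := univ.filter (fun a => (f a).isLeft) with hP
  set g : ↥A → V := fun a => Sum.elim id (fun _ => a.1) (f a) with hg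
  have hPleft : ∀ a ∈ P, f a = Sum.inl (g a) := by
    intro a ha
    have h2 := (Finset.mem_filter.1 ha).2
    rcases hfa : f a with b | i
    · simp [hg, hfa]
    · rw [hfa] at h2; simp at h2
  have hadj : ∀ a ∈ P, G.Adj a.1 (g a) := by
    intro a ha
    have h1 := hft a
    rw [hPleft a ha] at h1
    rcases Finset.mem_union.1 h1 with h1 | h1
    · obtain ⟨b, hb, hbe⟩ := Finset.mem_image.1 h1
      have hbg : b = g a := Sum.inl_injective hbe
      exact hbg ▸ (Finset.mem_filter.1 hb).2
    · obtain ⟨i, -, hie⟩ := Finset.mem_image.1 h1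
      simp at hie
  have hca : ∀ a : ↥A, c a.1 = 0 := fun a => (Finset.mem_filter.1 a.2).2
  have hgB : ∀ a ∈ P, c (g a) ≠ 0 := by
    intro a ha h0
    have hv := c.valid (hadj a ha)
    rw [hca a, h0] at hv
    exact hv rfl
  set M : Finset (Sym2 V) := P.image (fun a => s(a.1, g a)) with hM
  have hinjOn : Set.InjOn (fun a : ↥A => s(a.1, g a)) ↑P := by
    intro a ha a' ha' hee
    simp only [Sym2.eq_iff] at hee
    rcases hee with ⟨h1, h2⟩ | ⟨h1, h2⟩
    · exact Subtype.ext h1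
    · exact absurd (h1 ▸ hca a) (hgB a' ha')
  have hMcard : M.card = P.card := Finset.card_image_of_injOn hinjOn
  have hMmatch : IsMatchingSet G M := by
    constructor
    · intro e he
      obtain ⟨a, ha, rfl⟩ := Finset.mem_image.1 he
      exact (hadj a ha)
    · intro e₁ he₁ e₂ he₂ hne v hv₁ hv₂
      obtain ⟨a, ha, rfl⟩ := Finset.mem_image.1 he₁
      obtain ⟨a', ha', rfl⟩ := Finset.mem_image.1 he₂
      have hane : a ≠ a' := fun h => hne (by rw [h])
      have hgne : g a ≠ g a' := by
        intro h
        exact hane (hfinj (by rw [hPleft a ha, hPleft a' ha', h]))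
      have h1ne : a.1 ≠ a'.1 := fun h => hane (Subtype.ext h)
      rw [Sym2.mem_iff] at hv₁ hv₂
      rcases hv₁ with rfl | rfl <;> rcases hv₂ with h | h
      · exact h1ne h
      · exact absurd (h ▸ hca a) (hgB a' ha')
      · exact hgB a ha (by rw [h]; exact hca a')
      · exact hgne h
  have hPc : P.card + (univ.filter (fun a : ↥A => ¬ (f a).isLeft)).card = A.card := by
    rw [hP, Finset.card_filter_add_card_filter_not, Finset.card_univ, Fintype.card_coe]
  have hQd : (univ.filter (fun a : ↥A => ¬ (f a).isLeft)).card ≤ d := by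
    have := Finset.card_le_card_of_injOn (f := fun a : ↥A => (f a).getRight?)
      (s := univ.filter (fun a : ↥A => ¬ (f a).isLeft))
      (t := (univ : Finset (Fin d)).image some) ?_ ?_
    · rwa [Finset.card_image_of_injective _ (Option.some_injective _), Finset.card_univ,
        Fintype.card_fin] at this
    · intro a ha
      have h2 := (Finset.mem_filter.1 ha).2
      rcases hfa : f a with b | i
      · rw [hfa] at h2; simp at h2
      · exact Finset.mem_image.2 ⟨i, Finset.mem_univ _, by show some i = (f a).getRight?; rw [hfa]; rfl⟩
    · intro a ha a' ha' hee
      have h2 := (Finset.mem_filter.1 ha).2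
      have h2' := (Finset.mem_filter.1 ha').2
      rcases hfa : f a with b | i
      · rw [hfa] at h2; simp at h2
      rcases hfa' : f a' with b' | i'
      · rw [hfa'] at h2'; simp at h2'
      have hee' : (f a).getRight? = (f a').getRight? := hee
      rw [hfa, hfa'] at hee'
      simp only [Sum.getRight?, Option.some_inj] at hee'
      apply hfinj
      rw [hfa, hfa', hee']
  obtain ⟨S₀, hS₀mem, hS₀⟩ :=
    Finset.exists_mem_eq_sup A.powerset ⟨∅, Finset.empty_mem_powerset _⟩
      (fun S => S.card - (Nb S).card)
  have hS₀A : S₀ ⊆ A := Finset.mem_powerset.1 hS₀mem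
  have hcover : ∀ (C : Finset V), (∀ x y, G.Adj x y → c x = 0 → (∃ v ∈ C, v ∈ s(x, y))) →
      ∀ e ∈ G.edgeSet, ∃ v ∈ C, v ∈ e := by
    intro C hC e he
    induction e with
    | _ x y =>
      rw [SimpleGraph.mem_edgeSet] at he
      have hxy := c.valid he
      have h01 : ∀ i j : Fin 2, i ≠ j → i = 0 ∨ j = 0 := by decide
      rcases h01 _ _ hxy with h0 | h0
      · exact hC x y he h0
      · obtain ⟨v, hv, hve⟩ := hC y x he.symm h0
        exact ⟨v, hv, by rwa [Sym2.eq_swap]⟩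
  rcases Nat.eq_zero_or_pos d with hd0 | hd0
  · refine ⟨M, A, hMmatch, hcover A ?_, ?_⟩
    · intro x y _ h0
      exact ⟨x, Finset.mem_filter.2 ⟨Finset.mem_univ _, h0⟩, Sym2.mem_mk_left _ _⟩
    · omega
  · refine ⟨M, (A \ S₀) ∪ Nb S₀, hMmatch, hcover _ ?_, ?_⟩
    · intro x y hxy h0
      have hxA : x ∈ A := Finset.mem_filter.2 ⟨Finset.mem_univ _, h0⟩
      by_cases hxS : x ∈ S₀
      · exact ⟨y, Finset.mem_union_right _
          (Finset.mem_filter.2 ⟨Finset.mem_univ _, x, hxS, hxy⟩), Sym2.mem_mk_right _ _⟩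
      · exact ⟨x, Finset.mem_union_left _ (Finset.mem_sdiff.2 ⟨hxA, hxS⟩), Sym2.mem_mk_left _ _⟩
    · have h1 : ((A \ S₀) ∪ Nb S₀).card ≤ (A.card - S₀.card) + (Nb S₀).card := by
        have := Finset.card_union_le (A \ S₀) (Nb S₀)
        rwa [Finset.card_sdiff_of_subset hS₀A] at this
      have h2 : S₀.card ≤ A.card := Finset.card_le_card hS₀A
      omega



lemma weight_le_cover (G : SimpleGraph V) (k : ℕ) (h : Sym2 V → ℕ)
    (hh : IsIntKMatching G k h) (C : Finset V)
    (hcov : ∀ e ∈ G.edgeSet, ∃ v ∈ C, v ∈ e) :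
    totalWeight h ≤ k * C.card := by
  classical
  have h1 : ∑ v ∈ C, vsum h v
      = ∑ e ∈ (univ : Finset (Sym2 V)), (C.filter (fun v => v ∈ e)).card * h e := by
    unfold vsum
    calc ∑ v ∈ C, ∑ e ∈ univ.filter (fun e => v ∈ e), h e
        = ∑ v ∈ C, ∑ e ∈ (univ : Finset (Sym2 V)), if v ∈ e then h e else 0 := by
          exact Finset.sum_congr rfl fun v _ => Finset.sum_filter _ _
      _ = ∑ e ∈ (univ : Finset (Sym2 V)), ∑ v ∈ C, if v ∈ e then h e else 0 :=
          Finset.sum_comm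
      _ = ∑ e ∈ (univ : Finset (Sym2 V)), (C.filter (fun v => v ∈ e)).card * h e := by
          refine Finset.sum_congr rfl fun e _ => ?_
          rw [← Finset.sum_filter, Finset.sum_const, smul_eq_mul]
  have h2 : totalWeight h ≤ ∑ v ∈ C, vsum h v := by
    rw [h1]
    unfold totalWeight
    refine Finset.sum_le_sum fun e _ => ?_
    rcases Nat.eq_zero_or_pos (h e) with h0 | h0
    · simp [h0]
    · have he : e ∈ G.edgeSet := by
        by_contra hne
        exact absurd (hh.2.1 e hne) (by omega)
      obtain ⟨v, hv, hve⟩ := hcov e he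
      have : 0 < (C.filter (fun v => v ∈ e)).card :=
        Finset.card_pos.2 ⟨v, Finset.mem_filter.2 ⟨hv, hve⟩⟩
      exact Nat.le_mul_of_pos_left _ this
  calc totalWeight h ≤ ∑ v ∈ C, vsum h v := h2
    _ ≤ ∑ _v ∈ C, k := Finset.sum_le_sum fun v _ => hh.2.2 v
    _ = C.card * k := by rw [Finset.sum_const, smul_eq_mul]
    _ = k * C.card := Nat.mul_comm _ _

lemma matching_to_kmatching (G : SimpleGraph V) (k : ℕ) (M : Finset (Sym2 V))
    (hM : IsMatchingSet G M) :
    IsIntKMatching G k (fun e => if e ∈ M then k else 0) ∧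
      totalWeight (fun e => if e ∈ M then k else 0) = k * M.card := by
  classical
  refine ⟨⟨fun e => ?_, fun e he => ?_, fun v => ?_⟩, ?_⟩
  · by_cases hmem : e ∈ M <;> simp [hmem]
  · by_cases hmem : e ∈ M
    · exact absurd (hM.1 hmem) he
    · simp [hmem]
  · unfold vsum
    rw [Finset.sum_ite_mem]
    rw [Finset.sum_const, smul_eq_mul]
    have hc1 : ((univ.filter (fun e : Sym2 V => v ∈ e)) ∩ M).card ≤ 1 := by
      refine Finset.card_le_one.2 fun a ha b hb => ?_
      obtain ⟨ha1, ha2⟩ := Finset.mem_inter.1 ha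
      obtain ⟨hb1, hb2⟩ := Finset.mem_inter.1 hb
      by_contra hne
      exact hM.2 a ha2 b hb2 hne v (Finset.mem_filter.1 ha1).2 (Finset.mem_filter.1 hb1).2
    calc _ ≤ 1 * k := Nat.mul_le_mul_right k hc1
      _ = k := one_mul k
  · unfold totalWeight
    rw [Finset.sum_ite_mem, Finset.univ_inter, Finset.sum_const, smul_eq_mul, Nat.mul_comm]

lemma empty_matching (G : SimpleGraph V) : IsMatchingSet G (∅ : Finset (Sym2 V)) := by
  constructor
  · simp
  · intro e₁ he₁; simp at he₁

lemma zero_kmatching (G : SimpleGraph V) (k : ℕ) :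
    IsIntKMatching G k (fun _ => 0) ∧ totalWeight (fun _ : Sym2 V => 0) = 0 := by
  refine ⟨⟨fun e => Nat.zero_le _, fun e _ => rfl, fun v => ?_⟩, by simp [totalWeight]⟩
  simp [vsum]


end IntKM

theorem stmt14 {V : Type*} [Fintype V] [DecidableEq V] (G : SimpleGraph V)
    (hbip : G.Colorable 2) (k : ℕ) (hk : 0 < k) :
    intKMatchingNumber G k = k * matchingNumber G := by
  classical
  obtain ⟨c⟩ := hbip
  obtain ⟨M0, C, hM0, hcov, hCM⟩ := IntKM.exists_matching_cover G c
  have bddM : BddAbove {n | ∃ M : Finset (Sym2 V), IsMatchingSet G M ∧ M.card = n} := by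
    refine ⟨Fintype.card (Sym2 V), ?_⟩
    rintro n ⟨M, -, rfl⟩
    exact Finset.card_le_univ M
  have bddK : BddAbove {w | ∃ h : Sym2 V → ℕ, IsIntKMatching G k h ∧ totalWeight h = w} := by
    refine ⟨k * Fintype.card (Sym2 V), ?_⟩
    rintro w ⟨h, hh, rfl⟩
    calc totalWeight h ≤ ∑ _e : Sym2 V, k := Finset.sum_le_sum fun e _ => hh.1 e
      _ = Fintype.card (Sym2 V) * k := by rw [Finset.sum_const, smul_eq_mul, Finset.card_univ]
      _ = k * Fintype.card (Sym2 V) := Nat.mul_comm _ _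
  have hM0le : M0.card ≤ matchingNumber G := le_csSup bddM ⟨M0, hM0, rfl⟩
  obtain ⟨Mmax, hMmax, hMcard⟩ : ∃ M, IsMatchingSet G M ∧ M.card = matchingNumber G :=
    Nat.sSup_mem (s := {n | ∃ M : Finset (Sym2 V), IsMatchingSet G M ∧ M.card = n})
      ⟨0, ∅, empty_matching G, Finset.card_empty⟩ bddM
  apply le_antisymm
  · refine csSup_le ⟨0, fun _ => 0, (zero_kmatching G k).1, (zero_kmatching G k).2⟩ ?_
    rintro w ⟨h, hh, rfl⟩
    calc totalWeight h ≤ k * C.card := weight_le_cover G k h hh C hcov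
      _ ≤ k * M0.card := Nat.mul_le_mul_left k hCM
      _ ≤ k * matchingNumber G := Nat.mul_le_mul_left k hM0le
  · obtain ⟨hkm, hw⟩ := matching_to_kmatching G k Mmax hMmax
    exact le_csSup bddK ⟨_, hkm, by rw [hw, hMcard]⟩
end

section
/- A bipartite graph G has a perfect integer k-matching if and only if G has a perfect matching. -/
open SimpleGraph Finset

open IntKM

private lemma IntKM.swap_sum {V : Type*} [Fintype V] [DecidableEq V] (h : Sym2 V → ℕ)
    (s : Finset V) :
    ∑ v ∈ s, vsum h v = ∑ e : Sym2 V, (s.filter (· ∈ e)).card * h e := by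
  unfold vsum
  simp_rw [Finset.sum_filter]
  rw [Finset.sum_comm]
  congr 1; ext e
  rw [← Finset.sum_filter, Finset.sum_const, smul_eq_mul]

private lemma IntKM.hard_dir {V : Type*} [Fintype V] [DecidableEq V] (G : SimpleGraph V)
    (hbip : G.Colorable 2) (k : ℕ) (hk : 0 < k)
    (h : Sym2 V → ℕ) (hle : ∀ e, h e ≤ k) (hout : ∀ e, e ∉ G.edgeSet → h e = 0)
    (hsum : ∀ v, vsum h v = k) : HasPerfectM G := by
  obtain ⟨c⟩ := hbip
  have fin2 : ∀ x : Fin 2, x ≠ 0 → x = 1 := by decide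
  have fin2'' : ∀ x y i : Fin 2, x ≠ y → x ≠ i → y = i := by decide
  have hpos : ∀ e, 0 < h e → e ∈ G.edgeSet := by
    intro e he
    by_contra hc
    simp [hout e hc] at he
  -- at most one endpoint of given color, for positive edges
  have key : ∀ (i : Fin 2) (s : Finset V), (∀ v ∈ s, c v = i) → ∀ e : Sym2 V, 0 < h e →
      (s.filter (· ∈ e)).card ≤ 1 := by
    intro i s hs e hepos
    rw [Finset.card_le_one]
    intro x hx y hy
    simp only [Finset.mem_filter] at hx hy
    induction e with
    | _ u w =>
      have hadj : G.Adj u w := G.mem_edgeSet.mp (hpos _ hepos)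
      have hcol := c.valid hadj
      rcases Sym2.mem_iff.mp hx.2 with rfl | rfl <;>
        rcases Sym2.mem_iff.mp hy.2 with rfl | rfl
      · rfl
      · exact absurd (by rw [hs _ hx.1, hs _ hy.1]) hcol
      · exact absurd (by rw [hs _ hy.1, hs _ hx.1]) hcol
      · rfl
  -- exactly one endpoint of each color for positive edges, when s is the full color class
  have keyex : ∀ (i : Fin 2) (e : Sym2 V), 0 < h e →
      ((Finset.univ.filter (fun v => c v = i)).filter (· ∈ e)).card = 1 := by
    intro i e hepos
    refine le_antisymm (key i _ (fun v hv => (Finset.mem_filter.mp hv).2) e hepos) ?_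
    rw [Nat.one_le_iff_ne_zero, ← Nat.pos_iff_ne_zero, Finset.card_pos]
    induction e with
    | _ u w =>
      have hadj : G.Adj u w := G.mem_edgeSet.mp (hpos _ hepos)
      have hcol := c.valid hadj
      by_cases hu : c u = i
      · exact ⟨u, by simp [hu]⟩
      · have hw : c w = i := by
          have := fin2'' (c u) (c w) i hcol hu
          exact this
        exact ⟨w, by simp [hw, Sym2.mem_iff]⟩
  classical
  set t : {v : V // c v = 0} → Finset V :=
    fun a => Finset.univ.filter (fun b => 0 < h s(↑a, b)) with ht
  -- Hall's condition
  have hall : ∀ s : Finset {v : V // c v = 0}, s.card ≤ (s.biUnion t).card := by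
    intro s
    set s' : Finset V := s.image Subtype.val with hs'
    have hcard : s'.card = s.card := Finset.card_image_of_injective _ Subtype.val_injective
    have hs0 : ∀ v ∈ s', c v = 0 := by
      intro v hv
      obtain ⟨a, _, rfl⟩ := Finset.mem_image.mp hv
      exact a.2
    set N : Finset V := s.biUnion t with hN
    have step1 : k * s.card = ∑ v ∈ s', vsum h v := by
      rw [hcard.symm, Finset.sum_congr rfl (fun v _ => hsum v), Finset.sum_const, smul_eq_mul,
        mul_comm]
    have step2 : ∑ v ∈ s', vsum h v ≤ ∑ v ∈ N, vsum h v := by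
      rw [swap_sum, swap_sum]
      apply Finset.sum_le_sum
      intro e _
      by_cases hepos : 0 < h e
      · apply Nat.mul_le_mul_right
        have hcA := key 0 s' hs0 e hepos
        rcases Nat.lt_or_ge (s'.filter (· ∈ e)).card 1 with hlt | hge
        · omega
        · -- some a ∈ s' with a ∈ e; then other endpoint is in N ∩ e
          obtain ⟨x, hx⟩ := Finset.card_pos.mp hge
          simp only [Finset.mem_filter] at hx
          obtain ⟨a, has, hav⟩ := Finset.mem_image.mp hx.1
          refine le_trans hcA ?_
          induction e with
          | _ u w =>
            have hadj : G.Adj u w := G.mem_edgeSet.mp (hpos _ hepos)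
            rw [Nat.one_le_iff_ne_zero, ← Nat.pos_iff_ne_zero, Finset.card_pos]
            rcases Sym2.mem_iff.mp hx.2 with rfl | rfl
            · refine ⟨w, Finset.mem_filter.mpr ⟨Finset.mem_biUnion.mpr ⟨a, has, ?_⟩, by
                simp [Sym2.mem_iff]⟩⟩
              simp only [ht, Finset.mem_filter, Finset.mem_univ, true_and, hav]
              exact hepos
            · refine ⟨u, Finset.mem_filter.mpr ⟨Finset.mem_biUnion.mpr ⟨a, has, ?_⟩, by
                simp [Sym2.mem_iff]⟩⟩
              simp only [ht, Finset.mem_filter, Finset.mem_univ, true_and, hav]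
              rw [Sym2.eq_swap]
              exact hepos
      · have : h e = 0 := by omega
        simp [this]
    have step3 : ∑ v ∈ N, vsum h v = k * N.card := by
      rw [Finset.sum_congr rfl (fun v (_ : v ∈ N) => hsum v), Finset.sum_const, smul_eq_mul,
        mul_comm]
    have : k * s.card ≤ k * N.card := by omega
    exact Nat.le_of_mul_le_mul_left this hk
  obtain ⟨f, hfinj, hft⟩ := (Finset.all_card_le_biUnion_card_iff_exists_injective t).mp hall
  have hfpos : ∀ a : {v : V // c v = 0}, 0 < h s(↑a, f a) := by
    intro a
    have := hft a
    simpa only [ht, Finset.mem_filter, Finset.mem_univ, true_and] using this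
  have hfadj : ∀ a : {v : V // c v = 0}, G.Adj ↑a (f a) := fun a => G.mem_edgeSet.mp (hpos _ (hfpos a))
  have hfc : ∀ a : {v : V // c v = 0}, c (f a) = 1 := by
    intro a
    exact fin2 _ (fun q => c.valid (hfadj a) (a.2.trans q.symm))
  -- |A| = |B|
  set A : Finset V := Finset.univ.filter (fun v => c v = 0) with hA
  set B : Finset V := Finset.univ.filter (fun v => c v = 1) with hB
  have hABcard : A.card = B.card := by
    have e1 : ∑ v ∈ A, vsum h v = ∑ v ∈ B, vsum h v := by
      rw [swap_sum, swap_sum]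
      apply Finset.sum_congr rfl
      intro e _
      by_cases hepos : 0 < h e
      · rw [keyex 0 e hepos, keyex 1 e hepos]
      · have : h e = 0 := by omega
        simp [this]
    have eA : ∑ v ∈ A, vsum h v = k * A.card := by
      rw [Finset.sum_congr rfl (fun v (_ : v ∈ A) => hsum v), Finset.sum_const, smul_eq_mul,
        mul_comm]
    have eB : ∑ v ∈ B, vsum h v = k * B.card := by
      rw [Finset.sum_congr rfl (fun v (_ : v ∈ B) => hsum v), Finset.sum_const, smul_eq_mul,
        mul_comm]
    have e2 : k * A.card = k * B.card := by omega
    exact Nat.eq_of_mul_eq_mul_left hk e2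
  -- f's image is all of B
  set Mf : Finset V := Finset.univ.image f with hMf
  have hMfB : Mf ⊆ B := by
    intro b hb
    obtain ⟨a, _, rfl⟩ := Finset.mem_image.mp hb
    simp [hB, hfc a]
  have hMfcard : Mf.card = B.card := by
    rw [hMf, Finset.card_image_of_injective _ hfinj, ← hABcard]
    rw [hA]
    rw [Finset.card_univ]
    rw [← Fintype.card_subtype]
  have hMfeq : Mf = B := Finset.eq_of_subset_of_card_le hMfB (le_of_eq hMfcard.symm)
  -- build the matching
  refine ⟨Finset.univ.image (fun a : {v : V // c v = 0} => s(↑a, f a)), ⟨?_, ?_⟩, ?_⟩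
  · intro e he
    obtain ⟨a, _, rfl⟩ := Finset.mem_image.mp he
    exact hfadj a
  · intro e₁ he₁ e₂ he₂ hne v hv1 hv2
    obtain ⟨a₁, _, rfl⟩ := Finset.mem_image.mp he₁
    obtain ⟨a₂, _, rfl⟩ := Finset.mem_image.mp he₂
    have hane : a₁ ≠ a₂ := fun q => hne (by rw [q])
    rcases Sym2.mem_iff.mp hv1 with rfl | rfl <;> rcases Sym2.mem_iff.mp hv2 with hq | hq
    · exact hane (Subtype.ext hq)
    · exact absurd (a₁.2.symm.trans (hq ▸ hfc a₂)) (by simp)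
    · exact absurd ((hfc a₁).symm.trans (hq ▸ a₂.2)) (by simp)
    · exact hane (hfinj hq)
  · intro v
    by_cases hv : c v = 0
    · exact ⟨s(v, f ⟨v, hv⟩), Finset.mem_image.mpr ⟨⟨v, hv⟩, Finset.mem_univ _, rfl⟩,
        Sym2.mem_mk_left _ _⟩
    · have hvB : v ∈ B := by simp [hB, fin2 _ hv]
      rw [← hMfeq] at hvB
      obtain ⟨a, _, rfl⟩ := Finset.mem_image.mp hvB
      exact ⟨s(↑a, f a), Finset.mem_image.mpr ⟨a, Finset.mem_univ _, rfl⟩, Sym2.mem_mk_right _ _⟩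

theorem stmt15 {V : Type*} [Fintype V] [DecidableEq V] (G : SimpleGraph V)
    (hbip : G.Colorable 2) (k : ℕ) (hk : 0 < k) :
    HasPerfect G k ↔ HasPerfectM G := by
  constructor
  · rintro ⟨h, ⟨hle, hout, _⟩, hsum⟩
    exact IntKM.hard_dir G hbip k hk h hle hout hsum
  · rintro ⟨M, ⟨hMsub, hMdisj⟩, hMcov⟩
    have hv : ∀ v, vsum (fun e => if e ∈ M then k else 0) v = k := by
      intro v
      obtain ⟨e₀, he₀M, hve₀⟩ := hMcov v
      have hset : (Finset.univ.filter (fun e : Sym2 V => v ∈ e)).filter (· ∈ M) = {e₀} := by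
        ext e
        simp only [Finset.mem_filter, Finset.mem_univ, true_and, Finset.mem_singleton]
        constructor
        · rintro ⟨hve, heM⟩
          by_contra hne
          exact hMdisj e heM e₀ he₀M hne v hve hve₀
        · rintro rfl
          exact ⟨hve₀, he₀M⟩
      unfold vsum
      rw [Finset.sum_ite_mem, ← Finset.filter_mem_eq_inter, hset, Finset.sum_singleton]
    refine ⟨fun e => if e ∈ M then k else 0, ⟨fun e => by dsimp only; split <;> omega,
      fun e he => by simp only [ite_eq_right_iff]; exact fun hm => absurd (hMsub hm) he,
      fun v => le_of_eq (hv v)⟩, hv⟩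
end

section
/- Let k ≥ 3 be odd and G be a bipartite graph. If |V(G)| is odd then mp^k(G) = smp^k(G) = 0; if |V(G)| is even then mp^k(G) = mp(G) and smp^k(G) ≤ smp(G). -/
open SimpleGraph Finset

open IntKM

section Helpers

set_option linter.unusedSectionVars false
set_option maxHeartbeats 1000000

variable {W : Type*} [Fintype W] [DecidableEq W]

lemma sum_vsum (h : Sym2 W → ℕ) (s : Finset W) :
    ∑ v ∈ s, vsum h v = ∑ e : Sym2 W, h e * (s.filter (fun v => v ∈ e)).card := by
  simp only [vsum, Finset.sum_filter]
  rw [Finset.sum_comm]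
  refine Finset.sum_congr rfl fun e _ => ?_
  rw [← Finset.sum_filter, Finset.sum_const, smul_eq_mul, mul_comm]

lemma card_filter_mem_univ {x y : W} (hxy : x ≠ y) :
    ((Finset.univ : Finset W).filter (fun v => v ∈ s(x,y))).card = 2 := by
  have : ((Finset.univ : Finset W).filter (fun v => v ∈ s(x,y))) = {x, y} := by
    ext v; simp [Sym2.mem_iff]
  rw [this, Finset.card_pair hxy]

lemma even_sum_vsum (h : Sym2 W → ℕ) (h0 : ∀ e, h e ≠ 0 → ¬ e.IsDiag) :
    Even (∑ v : W, vsum h v) := by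
  rw [sum_vsum]
  refine Finset.even_sum _ fun e _ => ?_
  by_cases he : h e = 0
  · simp [he]
  · induction e with
    | h x y =>
      have hxy : x ≠ y := fun hxyeq => h0 _ he (by simp [hxyeq])
      rw [card_filter_mem_univ hxy]
      exact ⟨h s(x,y), by ring⟩

lemma edge_decomp (H : SimpleGraph W) (c : W → Fin 2)
    (hc : ∀ u v, H.Adj u v → c u ≠ c v) (h : Sym2 W → ℕ)
    (h0 : ∀ e, e ∉ H.edgeSet → h e = 0) :
    ∀ e, h e ≠ 0 → ∃ x y, e = s(x,y) ∧ H.Adj x y ∧ c x = 0 ∧ c y = 1 := by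
  intro e
  induction e with
  | h x y =>
    intro he
    have hmem : s(x,y) ∈ H.edgeSet := by by_contra hmem; exact he (h0 _ hmem)
    have hadj : H.Adj x y := hmem
    have hne := hc _ _ hadj
    rcases (show c x = 0 ∨ c x = 1 by omega) with h1 | h1
    · exact ⟨x, y, rfl, hadj, h1, by omega⟩
    · exact ⟨y, x, Sym2.eq_swap, hadj.symm, by omega, h1⟩

lemma card_filter_color (c : W → Fin 2) (i : Fin 2) {x y : W}
    (hx : c x = 0) (hy : c y = 1) (hxy : x ≠ y) :
    ((Finset.univ.filter (fun v => c v = i)).filter (fun v => v ∈ s(x,y))).card = 1 := by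
  rcases (show i = 0 ∨ i = 1 by omega) with rfl | rfl
  · have : ((Finset.univ.filter (fun v => c v = (0:Fin 2))).filter (fun v => v ∈ s(x,y)))
        = {x} := by
      ext v
      simp only [Finset.mem_filter, Finset.mem_univ, true_and, Sym2.mem_iff,
        Finset.mem_singleton]
      constructor
      · rintro ⟨hv, rfl | rfl⟩
        · rfl
        · omega
      · rintro rfl; exact ⟨hx, Or.inl rfl⟩
    rw [this, Finset.card_singleton]
  · have : ((Finset.univ.filter (fun v => c v = (1:Fin 2))).filter (fun v => v ∈ s(x,y)))
        = {y} := by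
      ext v
      simp only [Finset.mem_filter, Finset.mem_univ, true_and, Sym2.mem_iff,
        Finset.mem_singleton]
      constructor
      · rintro ⟨hv, rfl | rfl⟩
        · omega
        · rfl
      · rintro rfl; exact ⟨hy, Or.inr rfl⟩
    rw [this, Finset.card_singleton]

lemma side_sum (H : SimpleGraph W) (c : W → Fin 2)
    (hc : ∀ u v, H.Adj u v → c u ≠ c v) (h : Sym2 W → ℕ)
    (h0 : ∀ e, e ∉ H.edgeSet → h e = 0) :
    ∑ v ∈ Finset.univ.filter (fun v => c v = 0), vsum h v
      = ∑ v ∈ Finset.univ.filter (fun v => c v = 1), vsum h v := by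
  rw [sum_vsum, sum_vsum]
  refine Finset.sum_congr rfl fun e _ => ?_
  by_cases he : h e = 0
  · simp [he]
  · obtain ⟨x, y, rfl, hadj, hx, hy⟩ := edge_decomp H c hc h h0 e he
    rw [card_filter_color c 0 hx hy hadj.ne, card_filter_color c 1 hx hy hadj.ne]

lemma no_perfect_odd (H : SimpleGraph W) {k : ℕ} (hk : Odd k)
    (hodd : Odd (Fintype.card W)) : ¬ HasPerfect H k := by
  rintro ⟨h, ⟨-, h0, -⟩, hall⟩
  have heven := even_sum_vsum h (fun e he =>
    H.not_isDiag_of_mem_edgeSet (by by_contra hm; exact he (h0 e hm)))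
  rw [Finset.sum_congr rfl (fun v _ => hall v), Finset.sum_const, smul_eq_mul,
    Finset.card_univ] at heven
  exact (Nat.not_even_iff_odd.mpr (hodd.mul hk)) heven

lemma no_almost_bip (H : SimpleGraph W) (c : W → Fin 2)
    (hc : ∀ u v, H.Adj u v → c u ≠ c v) {k : ℕ} (hk2 : 2 ≤ k) :
    ¬ HasAlmost H k := by
  rintro ⟨h, ⟨-, h0, -⟩, v', hv', hall⟩
  have hAB := side_sum H c hc h h0
  have key : ∀ i : Fin 2, (∑ v ∈ Finset.univ.filter (fun v => c v = i), vsum h v)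
      + (if c v' = i then 1 else 0)
      = (Finset.univ.filter (fun v => c v = i)).card * k := by
    intro i
    have hterm : ∀ v ∈ Finset.univ.filter (fun v => c v = i),
        vsum h v + (if v = v' then 1 else 0) = k := by
      intro v _
      by_cases hvv : v = v'
      · subst hvv; rw [hv']; simp; omega
      · simp [hvv, hall v hvv]
    calc (∑ v ∈ Finset.univ.filter (fun v => c v = i), vsum h v)
          + (if c v' = i then 1 else 0)
        = ∑ v ∈ Finset.univ.filter (fun v => c v = i),
            (vsum h v + if v = v' then 1 else 0) := by
          rw [Finset.sum_add_distrib, Finset.sum_ite_eq' _ v' (fun _ => 1)]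
          simp [Finset.mem_filter]
      _ = _ := by
          rw [Finset.sum_congr rfl hterm, Finset.sum_const, smul_eq_mul, mul_comm]
  have k0 := key 0
  have k1 := key 1
  set a := (Finset.univ.filter (fun v => c v = (0:Fin 2))).card with ha
  set b := (Finset.univ.filter (fun v => c v = (1:Fin 2))).card with hb
  have habk : a * k = b * k + 1 ∨ b * k = a * k + 1 := by
    rcases (show c v' = 0 ∨ c v' = 1 by omega) with hcv | hcv <;>
      simp [hcv] at k0 k1 <;> omega
  rcases habk with hh | hh
  · rcases le_or_gt a b with hle | hlt
    · have := Nat.mul_le_mul_right k hle; omega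
    · have : b + 1 ≤ a := hlt
      have := Nat.mul_le_mul_right k this
      rw [add_mul, one_mul] at this; omega
  · rcases le_or_gt b a with hle | hlt
    · have := Nat.mul_le_mul_right k hle; omega
    · have : a + 1 ≤ b := hlt
      have := Nat.mul_le_mul_right k this
      rw [add_mul, one_mul] at this; omega

lemma perfectM_to_perfect (H : SimpleGraph W) (k : ℕ) (hp : HasPerfectM H) :
    HasPerfect H k := by
  obtain ⟨M, ⟨hsub, hdisj⟩, hcov⟩ := hp
  have hv : ∀ v : W, vsum (fun e => if e ∈ M then k else 0) v = k := by
    intro v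
    obtain ⟨e₀, he₀M, he₀v⟩ := hcov v
    have hset : ((Finset.univ.filter (fun e => v ∈ e)).filter (fun e => e ∈ M)) = {e₀} := by
      ext e
      simp only [Finset.mem_filter, Finset.mem_univ, true_and, Finset.mem_singleton]
      constructor
      · rintro ⟨hve, heM⟩
        by_contra hne
        exact hdisj e heM e₀ he₀M hne v hve he₀v
      · rintro rfl; exact ⟨he₀v, he₀M⟩
    rw [vsum, ← Finset.sum_filter, hset, Finset.sum_singleton]
  refine ⟨fun e => if e ∈ M then k else 0, ⟨fun e => by dsimp only; split <;> omega,
    fun e he => ?_, fun v => (hv v).le⟩, hv⟩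
  have : e ∉ M := fun hm => he (hsub hm)
  simp [this]

lemma no_almostM_even (H : SimpleGraph W) (he : Even (Fintype.card W)) :
    ¬ HasAlmostM H := by
  rintro ⟨M, ⟨hsub, hdisj⟩, v', hv', hcov⟩
  have hbu : Finset.univ.erase v'
      = M.biUnion (fun e => Finset.univ.filter (fun v => v ∈ e)) := by
    ext v
    simp only [Finset.mem_erase, Finset.mem_univ, and_true, Finset.mem_biUnion,
      Finset.mem_filter, true_and]
    constructor
    · intro hv; exact hcov v hv
    · rintro ⟨e, heM, hve⟩ rfl
      exact hv' e heM hve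
  have hdisj' : ∀ e₁ ∈ M, ∀ e₂ ∈ M, e₁ ≠ e₂ →
      Disjoint (Finset.univ.filter (fun v => v ∈ e₁))
        (Finset.univ.filter (fun v => v ∈ e₂)) := by
    intro e₁ h₁ e₂ h₂ hne
    rw [Finset.disjoint_left]
    intro v hv1 hv2
    simp only [Finset.mem_filter, Finset.mem_univ, true_and] at hv1 hv2
    exact hdisj e₁ h₁ e₂ h₂ hne v hv1 hv2
  have hcard : (Finset.univ.erase v').card
      = ∑ e ∈ M, (Finset.univ.filter (fun v => v ∈ e)).card := by
    rw [hbu]; exact Finset.card_biUnion hdisj'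
  have hsum2 : ∑ e ∈ M, (Finset.univ.filter (fun v => v ∈ e)).card = 2 * M.card := by
    rw [Finset.sum_congr rfl (fun e heM => ?_), Finset.sum_const, smul_eq_mul, mul_comm]
    have hd := H.not_isDiag_of_mem_edgeSet (hsub heM)
    induction e with
    | h x y => exact card_filter_mem_univ (by simpa using hd)
  rw [Finset.card_erase_of_mem (Finset.mem_univ _), Finset.card_univ, hsum2] at hcard
  have hpos : 0 < Fintype.card W := Fintype.card_pos_iff.mpr ⟨v'⟩
  obtain ⟨m, hm⟩ := he
  omega

lemma perfect_to_perfectM (H : SimpleGraph W) (c : W → Fin 2)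
    (hc : ∀ u v, H.Adj u v → c u ≠ c v) {k : ℕ} (hk : 1 ≤ k)
    (hp : HasPerfect H k) : HasPerfectM H := by
  classical
  obtain ⟨h, ⟨hle, h0, hub⟩, hall⟩ := hp
  have hdec := edge_decomp H c hc h h0
  have hsum : ∀ s : Finset W, ∑ v ∈ s, vsum h v = s.card * k := fun s => by
    rw [Finset.sum_congr rfl (fun v _ => hall v), Finset.sum_const, smul_eq_mul]
  have hHall : ∀ s : Finset {v : W // c v = 0},
      s.card ≤ (s.biUnion (fun a => (Finset.univ.filter (fun w => H.Adj a.val w)))).card := by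
    intro s
    set t := s.biUnion (fun a => (Finset.univ.filter (fun w => H.Adj a.val w))) with ht
    set s' := s.image Subtype.val with hs'
    have hcs : s'.card = s.card := Finset.card_image_of_injective _ Subtype.val_injective
    have hcol : ∀ v ∈ s', c v = 0 := by
      intro v hv
      obtain ⟨a, _, rfl⟩ := Finset.mem_image.mp hv
      exact a.prop
    have hkey : k * s'.card ≤ k * t.card := by
      have hterm : ∀ e ∈ (Finset.univ : Finset (Sym2 W)),
          h e * (s'.filter (fun v => v ∈ e)).card
            ≤ h e * (t.filter (fun v => v ∈ e)).card := by
        intro e _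
        by_cases he : h e = 0
        · simp [he]
        · obtain ⟨x, y, rfl, hadj, hx, hy⟩ := hdec e he
          refine Nat.mul_le_mul_left _ ?_
          by_cases hne : (s'.filter (fun v => v ∈ s(x,y))).Nonempty
          · obtain ⟨v, hv⟩ := hne
            have hv' := Finset.mem_filter.mp hv
            have hcv : c v = 0 := hcol v hv'.1
            have hvx : v = x := by
              rcases Sym2.mem_iff.mp hv'.2 with rfl | rfl
              · rfl
              · omega
            have h1 : (s'.filter (fun v => v ∈ s(x,y))).card ≤ 1 := by
              refine Finset.card_le_one.mpr fun a ha b hb => ?_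
              have ha' := Finset.mem_filter.mp ha
              have hb' := Finset.mem_filter.mp hb
              have hca : c a = 0 := hcol a ha'.1
              have hcb : c b = 0 := hcol b hb'.1
              have hax : a = x := by
                rcases Sym2.mem_iff.mp ha'.2 with rfl | rfl
                · rfl
                · omega
              have hbx : b = x := by
                rcases Sym2.mem_iff.mp hb'.2 with rfl | rfl
                · rfl
                · omega
              rw [hax, hbx]
            have h2 : 1 ≤ (t.filter (fun v => v ∈ s(x,y))).card := by
              refine Finset.card_pos.mpr ⟨y, ?_⟩
              rw [Finset.mem_filter]
              refine ⟨?_, Sym2.mem_iff.mpr (Or.inr rfl)⟩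
              subst hvx
              obtain ⟨a, ha, hav⟩ := Finset.mem_image.mp hv'.1
              refine Finset.mem_biUnion.mpr ⟨a, ha, ?_⟩
              rw [Finset.mem_filter, hav]
              exact ⟨Finset.mem_univ _, hadj⟩
            omega
          · rw [Finset.not_nonempty_iff_eq_empty.mp hne]
            simp
      calc k * s'.card = ∑ v ∈ s', vsum h v := by rw [hsum, mul_comm]
        _ = ∑ e : Sym2 W, h e * (s'.filter (fun v => v ∈ e)).card := sum_vsum h s'
        _ ≤ ∑ e : Sym2 W, h e * (t.filter (fun v => v ∈ e)).card :=
            Finset.sum_le_sum hterm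
        _ = ∑ v ∈ t, vsum h v := (sum_vsum h t).symm
        _ = k * t.card := by rw [hsum, mul_comm]
    have := Nat.le_of_mul_le_mul_left hkey (by omega)
    omega
  obtain ⟨f, hfinj, hfmem⟩ := (Finset.all_card_le_biUnion_card_iff_exists_injective
    (fun a : {v : W // c v = 0} => (Finset.univ.filter (fun w => H.Adj a.val w)))).mp hHall
  have hAdj : ∀ a, H.Adj a.val (f a) :=
    fun a => (Finset.mem_filter.mp (hfmem a)).2
  have hcf : ∀ a, c (f a) = 1 := by
    intro a
    have h1 := hc _ _ (hAdj a)
    have h2 := a.prop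
    omega
  have hAB := side_sum H c hc h h0
  rw [hsum, hsum] at hAB
  have hcards : (Finset.univ.filter (fun v => c v = (0:Fin 2))).card
      = (Finset.univ.filter (fun v => c v = (1:Fin 2))).card :=
    Nat.eq_of_mul_eq_mul_right (by omega) hAB
  have hgbij : Function.Bijective
      (fun a : {v : W // c v = 0} => (⟨f a, hcf a⟩ : {v : W // c v = 1})) := by
    rw [Fintype.bijective_iff_injective_and_card]
    refine ⟨fun a b hab => hfinj (by simpa [Subtype.ext_iff] using hab), ?_⟩
    rw [Fintype.card_subtype, Fintype.card_subtype, hcards]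
  refine ⟨Finset.univ.image (fun a : {v : W // c v = 0} => s(a.val, f a)), ⟨?_, ?_⟩, ?_⟩
  · intro e he
    obtain ⟨a, -, rfl⟩ := Finset.mem_image.mp (Finset.mem_coe.mp he)
    exact (hAdj a)
  · rintro e₁ h₁ e₂ h₂ hne v hv1 hv2
    obtain ⟨a₁, -, rfl⟩ := Finset.mem_image.mp h₁
    obtain ⟨a₂, -, rfl⟩ := Finset.mem_image.mp h₂
    have hne' : a₁ ≠ a₂ := fun hh => hne (by rw [hh])
    rcases Sym2.mem_iff.mp hv1 with rfl | rfl <;> rcases Sym2.mem_iff.mp hv2 with h3 | h3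
    · exact hne' (Subtype.ext h3)
    · have h4 := a₁.prop
      have h5 := hcf a₂
      rw [h3] at h4
      omega
    · have h4 := a₂.prop
      have h5 := hcf a₁
      rw [← h3] at h4
      omega
    · exact hne' (hfinj h3)
  · intro v
    rcases (show c v = 0 ∨ c v = 1 by omega) with hv | hv
    · exact ⟨s(v, f ⟨v, hv⟩), Finset.mem_image_of_mem _ (Finset.mem_univ (⟨v, hv⟩ : {v : W // c v = 0})), by simp⟩
    · obtain ⟨a, ha⟩ := hgbij.2 ⟨v, hv⟩
      have hfa : f a = v := congrArg Subtype.val ha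
      exact ⟨s(a.val, f a), Finset.mem_image_of_mem _ (Finset.mem_univ a),
        by rw [hfa]; simp⟩

lemma hasPerfect_of_isEmpty (H : SimpleGraph W) (k : ℕ) [IsEmpty W] :
    HasPerfect H k :=
  ⟨fun _ => 0, ⟨fun _ => Nat.zero_le k, fun _ _ => rfl, fun v => isEmptyElim v⟩,
    fun v => isEmptyElim v⟩

end Helpers


set_option maxHeartbeats 1000000 in
theorem stmt17 {V : Type*} [Fintype V] [DecidableEq V] (G : SimpleGraph V)
    (hbip : G.Colorable 2) (k : ℕ) (hk : Odd k) (hk3 : 3 ≤ k) :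
    (Odd (Fintype.card V) → mpk G k = 0 ∧ smpk G k = 0) ∧
    (Even (Fintype.card V) → mpk G k = mp G ∧ smpk G k ≤ smp G) := by
  classical
  obtain ⟨c₀⟩ := hbip
  have hk1 : 1 ≤ k := by omega
  have hk2 : 2 ≤ k := by omega
  -- proper coloring of deletion subgraphs
  have hcdel : ∀ (F : Finset (Sym2 V)) (u v : V),
      (G.deleteEdges ↑F).Adj u v → c₀ u ≠ c₀ v :=
    fun F u v hadj => c₀.valid (SimpleGraph.deleteEdges_adj.mp hadj).1
  -- proper coloring of induced subgraphs of deletion subgraphs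
  have hcind : ∀ (F : Finset (Sym2 V)) (S : Finset V)
      (u v : ((↑(Sᶜ) : Set V) : Type _)),
      ((G.deleteEdges ↑F).induce ((↑(Sᶜ) : Set V))).Adj u v →
        c₀ u.val ≠ c₀ v.val := by
    intro F S u v hadj
    exact c₀.valid (SimpleGraph.deleteEdges_adj.mp hadj).1
  constructor
  · intro hodd
    constructor
    · rw [mpk]
      refine Nat.sInf_eq_zero.mpr (Or.inl ⟨∅, by simp, by simp, ?_, ?_⟩)
      · exact no_perfect_odd _ hk hodd
      · exact no_almost_bip _ (fun v => c₀ v) (hcdel ∅) hk2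
    · rw [smpk]
      refine Nat.sInf_eq_zero.mpr (Or.inl ⟨∅, ∅, by simp, by simp, ?_, ?_⟩)
      · apply no_perfect_odd _ hk
        have hcardeq : Fintype.card ((↑(((∅ : Finset V))ᶜ) : Set V) : Type _)
            = Fintype.card V :=
          Fintype.card_congr (Equiv.subtypeUnivEquiv (fun x => by simp))
        rw [hcardeq]; exact hodd
      · exact no_almost_bip _ (fun x => c₀ x.val) (hcind ∅ ∅) hk2
  · intro heven
    constructor
    · rw [mpk, mp]
      congr 1
      ext n
      simp only [Set.mem_setOf_eq]
      constructor
      · rintro ⟨F, hF, hcard, hP, hA⟩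
        exact ⟨F, hF, hcard, fun hpm => hP (perfectM_to_perfect _ k hpm),
          no_almostM_even _ heven⟩
      · rintro ⟨F, hF, hcard, hPM, hAM⟩
        exact ⟨F, hF, hcard,
          fun hp => hPM (perfect_to_perfectM _ (fun v => c₀ v) (hcdel F) hk1 hp),
          no_almost_bip _ (fun v => c₀ v) (hcdel F) hk2⟩
    · by_cases hV : Fintype.card V = 0
      · have hVempty : IsEmpty V := Fintype.card_eq_zero_iff.mp hV
        have hzero : smpk G k = 0 := by
          rw [smpk]
          refine Nat.sInf_eq_zero.mpr (Or.inr ?_)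
          rw [Set.eq_empty_iff_forall_notMem]
          rintro n ⟨S, F, -, -, hP, -⟩
          have : IsEmpty ((↑(Sᶜ) : Set V) : Type _) := ⟨fun x => hVempty.elim x.val⟩
          exact hP (hasPerfect_of_isEmpty _ k)
        rw [hzero]; exact Nat.zero_le _
      · have h2V : 2 ≤ Fintype.card V := by
          obtain ⟨m, hm⟩ := heven; omega
        obtain ⟨u, w, huw⟩ : ∃ u w : V, u ≠ w :=
          Fintype.exists_pair_of_one_lt_card (by omega)
        set S₀ : Finset V := ({u, w} : Finset V)ᶜ with hS₀
        set F₀ : Finset (Sym2 V) := if G.Adj u w then {s(u, w)} else ∅ with hF₀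
        have hF₀sub : ↑F₀ ⊆ G.edgeSet := by
          rw [hF₀]
          split
          · intro e he
            rw [Finset.mem_coe, Finset.mem_singleton] at he
            subst he
            assumption
          · simp
        have huwm : ∀ x : V, x ∈ (↑(S₀ᶜ) : Set V) ↔ x = u ∨ x = w := by
          intro x
          simp [hS₀]
        have hno : ∀ a b : ((↑(S₀ᶜ) : Set V) : Type _),
            ¬ ((G.deleteEdges ↑F₀).induce ((↑(S₀ᶜ) : Set V))).Adj a b := by
          intro a b hadj
          have hadj' : (G.deleteEdges ↑F₀).Adj a.val b.val := hadj
          rw [SimpleGraph.deleteEdges_adj] at hadj'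
          obtain ⟨hGadj, hnmem⟩ := hadj'
          have hane : a.val ≠ b.val := hGadj.ne
          have ha := (huwm a.val).mp a.prop
          have hb := (huwm b.val).mp b.prop
          have heq : s(a.val, b.val) = s(u, w) := by
            rcases ha with ha | ha <;> rcases hb with hb | hb <;>
              simp_all [Sym2.eq_swap]
          apply hnmem
          rw [heq]
          have hGuw : G.Adj u w := by
            rcases ha with ha | ha <;> rcases hb with hb | hb
            · exact absurd (ha.trans hb.symm) hane
            · exact ha ▸ hb ▸ hGadj
            · exact (ha ▸ hb ▸ hGadj).symm
            · exact absurd (ha.trans hb.symm) hane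
          rw [hF₀]
          simp [hGuw]
        have hnoe : ∀ e : Sym2 ((↑(S₀ᶜ) : Set V) : Type _),
            e ∉ ((G.deleteEdges ↑F₀).induce ((↑(S₀ᶜ) : Set V))).edgeSet := by
          intro e
          induction e with
          | h a b => exact fun hh => hno a b hh
        have hu' : u ∈ (↑(S₀ᶜ) : Set V) := (huwm u).mpr (Or.inl rfl)
        have hw' : w ∈ (↑(S₀ᶜ) : Set V) := (huwm w).mpr (Or.inr rfl)
        have hPM₀ : ¬ HasPerfectM ((G.deleteEdges ↑F₀).induce ((↑(S₀ᶜ) : Set V))) := by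
          rintro ⟨M, ⟨hsub, -⟩, hcov⟩
          obtain ⟨e, heM, -⟩ := hcov ⟨u, hu'⟩
          exact hnoe e (hsub heM)
        have hAM₀ : ¬ HasAlmostM ((G.deleteEdges ↑F₀).induce ((↑(S₀ᶜ) : Set V))) := by
          rintro ⟨M, ⟨hsub, -⟩, v', -, hcov⟩
          by_cases hv : (⟨u, hu'⟩ : ((↑(S₀ᶜ) : Set V) : Type _)) = v'
          · have hne : (⟨w, hw'⟩ : ((↑(S₀ᶜ) : Set V) : Type _)) ≠ v' := by
              intro hh
              rw [← hv] at hh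
              exact huw (congrArg Subtype.val hh).symm
            obtain ⟨e, heM, -⟩ := hcov _ hne
            exact hnoe e (hsub heM)
          · obtain ⟨e, heM, -⟩ := hcov _ hv
            exact hnoe e (hsub heM)
        have hne_smp : {n | ∃ (S : Finset V) (F : Finset (Sym2 V)),
            ↑F ⊆ G.edgeSet ∧ S.card + F.card = n ∧
            ¬ HasPerfectM ((G.deleteEdges ↑F).induce ((↑(Sᶜ) : Set V))) ∧
            ¬ HasAlmostM ((G.deleteEdges ↑F).induce ((↑(Sᶜ) : Set V)))}.Nonempty :=
          ⟨S₀.card + F₀.card, S₀, F₀, hF₀sub, rfl, hPM₀, hAM₀⟩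
        have hmem := Nat.sInf_mem hne_smp
        obtain ⟨S, F, hF, hcard, hPM, hAM⟩ := hmem
        rw [smpk, smp]
        refine Nat.sInf_le ⟨S, F, hF, hcard, ?_, ?_⟩
        · intro hp
          rcases Nat.even_or_odd (Fintype.card ((↑(Sᶜ) : Set V) : Type _)) with hev | hod
          · exact hPM (perfect_to_perfectM _ (fun x => c₀ x.val) (hcind F S) hk1 hp)
          · exact no_perfect_odd _ hk hod hp
        · exact no_almost_bip _ (fun x => c₀ x.val) (hcind F S) hk2
end
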